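/- arXiv:2009.02239 — 6 statements merged into one kernel-verified Lean document; each statement's English description precedes it below -/
import Mathlib

section
/- Let T be a finite tree. Then the edges of T can be colored with 3 colors {0,1,2} so that (i) the coloring is conflict-free as an edge coloring (for every edge e there is a color appearing on exactly one edge among e and the edges sharing a vertex with e), and (ii) for every vertex v of positive degree there is a color c_v such that v is incident to exactly one edge of color c_v. -/
/-!
Root the tree at a leaf `r` and give each edge the depth of its upper endpoint mod 3. At a vertex
`v ≠ r` the edge to the parent has colour `depth v - 1` and the edges to children have colour
`depth v`, so the parent edge is alone in its colour; at `r` there is only one edge. For an edge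
`xy` with `x` the parent of `y`, the edges at `y` have colours `depth x` and `depth x + 1`, so the
parent edge of `x` is the only edge of colour `depth x - 1` meeting `xy`; if `x = r`, the edge `xy`
itself is the only one of colour `0`.
-/

open Fin.NatCast

theorem Fin.natCast_add_ne_natCast {m : ℕ} [NeZero m] (n : ℕ) {k : ℕ} (hk : k % m ≠ 0) :
    ((n + k : ℕ) : Fin m) ≠ n := by
  simpa [Fin.ext_iff, Fin.val_natCast] using hk

namespace SimpleGraph

variable {V : Type*} {G : SimpleGraph V} {r u w : V}

theorem IsAcyclic.eq_penultimate_of_adj_of_dist_lt (hG : G.IsAcyclic) {p : G.Walk r u}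
    (hp : p.IsPath) (hadj : G.Adj u w) (hlt : G.dist r w < G.dist r u) : w = p.penultimate := by
  classical
  obtain ⟨q, hq, hql⟩ := (p.reachable.trans hadj.reachable).exists_path_of_dist
  have hu : u ∉ q.support := fun hu =>
    hlt.not_ge <| hql ▸ (G.dist_le (q.takeUntil u hu)).trans (q.length_takeUntil_le_length hu)
  exact hG.eq_penultimate_of_adj_end hp hadj <|
    hG.mem_support_of_ne_mem_support_of_adj_of_isPath hp hq hadj hu

theorem IsTree.eq_of_adj_of_dist_lt (hG : G.IsTree) {w' : V} (hw : G.Adj u w) (hw' : G.Adj u w')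
    (hlt : G.dist r w < G.dist r u) (hlt' : G.dist r w' < G.dist r u) : w = w' := by
  obtain ⟨p, hp, -⟩ := hG.connected.exists_path_of_dist r u
  rw [hG.isAcyclic.eq_penultimate_of_adj_of_dist_lt hp hw hlt,
    hG.isAcyclic.eq_penultimate_of_adj_of_dist_lt hp hw' hlt']

theorem IsTree.exists_adj_dist_add_one (hG : G.IsTree) (hu : u ≠ r) :
    ∃ w, G.Adj w u ∧ G.dist r w + 1 = G.dist r u := by
  obtain ⟨p, -, hpl⟩ := hG.connected.exists_path_of_dist r u
  have hp : ¬p.Nil := fun h => hu h.eq.symm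
  refine ⟨p.penultimate, p.adj_penultimate hp, ?_⟩
  have hle : G.dist r p.penultimate + 1 ≤ G.dist r u :=
    hpl ▸ (Walk.length_dropLast_add_one hp) ▸ Nat.succ_le_succ (G.dist_le p.dropLast)
  have := hG.dist_eq_dist_add_one_of_adj r (p.adj_penultimate hp)
  omega

theorem IsTree.exists_subsingleton_neighborSet [Finite V] (hG : G.IsTree) :
    ∃ r, (G.neighborSet r).Subsingleton := by
  classical
  have := Fintype.ofFinite V
  cases subsingleton_or_nontrivial V
  · obtain ⟨r⟩ := hG.connected.nonempty
    exact ⟨r, Set.subsingleton_of_subsingleton⟩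
  · obtain ⟨r, hr⟩ := hG.exists_vert_degree_one_of_nontrivial
    obtain ⟨u, -, hu⟩ := degree_eq_one_iff_existsUnique_adj.mp hr
    exact ⟨r, fun x hx y hy => (hu x hx).trans (hu y hy).symm⟩

theorem eq_of_subsingleton_neighborSet (hr : (G.neighborSet r).Subsingleton) (hu : G.Adj r u)
    {e : Sym2 V} (he : e ∈ G.edgeSet) (hre : r ∈ e) : e = s(r, u) := by
  obtain ⟨w, rfl⟩ := Sym2.mem_iff_exists.mp hre
  rw [hr (G.mem_edgeSet.mp he) hu]

/-- In the paper's notation, the edge from `v` to a child gets colour `m(v) = dist r v mod 3`;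
the endpoint nearer to `r` is the parent. -/
noncomputable def depthColor (G : SimpleGraph V) (r : V) : Sym2 V → Fin 3 :=
  Sym2.lift ⟨fun a b => (min (G.dist r a) (G.dist r b) : ℕ), fun a b => by simp only [min_comm]⟩

theorem depthColor_mk {x y : V} (h : G.dist r y = G.dist r x + 1) :
    G.depthColor r s(x, y) = G.dist r x := by
  simp only [depthColor, Sym2.lift_mk, h, min_eq_left (Nat.le_succ _)]

theorem IsTree.exists_eq_mk_dist_add_one (hG : G.IsTree) (r : V) {e : Sym2 V}
    (he : e ∈ G.edgeSet) : ∃ x y, e = s(x, y) ∧ G.dist r y = G.dist r x + 1 := by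
  induction e using Sym2.ind with
  | _ x y =>
    rcases hG.dist_eq_dist_add_one_of_adj r (G.mem_edgeSet.mp he) with h | h
    · exact ⟨y, x, Sym2.eq_swap, h⟩
    · exact ⟨x, y, rfl, h⟩

theorem IsTree.eq_or_depthColor_eq (hG : G.IsTree) {p v : V} (hp : G.Adj p v)
    (hpv : G.dist r p + 1 = G.dist r v) {e : Sym2 V} (he : e ∈ G.edgeSet) (hve : v ∈ e) :
    e = s(p, v) ∨ G.depthColor r e = G.dist r v := by
  obtain ⟨w, rfl⟩ := Sym2.mem_iff_exists.mp hve
  have hvw := G.mem_edgeSet.mp he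
  rcases hG.dist_eq_dist_add_one_of_adj r hvw with h | h
  · left
    rw [hG.eq_of_adj_of_dist_lt (r := r) hvw hp.symm (by omega) (by omega), Sym2.eq_swap]
  · exact Or.inr (depthColor_mk h)

theorem IsTree.exists_existsUnique_mem_depthColor_eq (hG : G.IsTree)
    (hr : (G.neighborSet r).Subsingleton) {v : V} (hv : ∃ u, G.Adj v u) :
    ∃ c : Fin 3, ∃! e : G.edgeSet, v ∈ (e : Sym2 V) ∧ G.depthColor r e = c := by
  by_cases hvr : v = r
  · subst hvr
    obtain ⟨u, hu⟩ := hv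
    refine ⟨_, ⟨s(v, u), hu⟩, ⟨Sym2.mem_mk_left _ _, rfl⟩, ?_⟩
    rintro ⟨e, he⟩ ⟨hve, -⟩
    exact Subtype.ext (eq_of_subsingleton_neighborSet hr hu he hve)
  · obtain ⟨p, hp, hpv⟩ := hG.exists_adj_dist_add_one hvr
    refine ⟨G.dist r p, ⟨s(p, v), hp⟩, ⟨Sym2.mem_mk_right _ _, depthColor_mk hpv.symm⟩, ?_⟩
    rintro ⟨e, he⟩ ⟨hve, hc⟩
    refine Subtype.ext ((hG.eq_or_depthColor_eq hp hpv he hve).resolve_right fun h => ?_)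
    rw [h, ← hpv] at hc
    exact Fin.natCast_add_ne_natCast _ (by norm_num) hc

theorem IsTree.exists_existsUnique_adjacent_depthColor_eq (hG : G.IsTree)
    (hr : (G.neighborSet r).Subsingleton) (e : G.edgeSet) :
    ∃ c : Fin 3, ∃! e' : G.edgeSet,
      (∃ v, v ∈ (e : Sym2 V) ∧ v ∈ (e' : Sym2 V)) ∧ G.depthColor r e' = c := by
  obtain ⟨e, he⟩ := e
  obtain ⟨x, y, rfl, hxy⟩ := hG.exists_eq_mk_dist_add_one r he
  have hadj : G.Adj x y := G.mem_edgeSet.mp he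
  by_cases hxr : x = r
  · subst hxr
    refine ⟨_, ⟨s(x, y), he⟩, ⟨⟨x, Sym2.mem_mk_left _ _, Sym2.mem_mk_left _ _⟩, rfl⟩, ?_⟩
    rintro ⟨e', he'⟩ ⟨⟨z, hz, hz'⟩, hc⟩
    apply Subtype.ext
    rcases Sym2.mem_iff.mp hz with rfl | rfl
    · exact eq_of_subsingleton_neighborSet hr hadj he' hz'
    · refine (hG.eq_or_depthColor_eq hadj hxy.symm he' hz').resolve_right fun h => ?_
      rw [h, depthColor_mk hxy, hxy] at hc
      exact Fin.natCast_add_ne_natCast _ (by norm_num) hc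
  · obtain ⟨p, hp, hpx⟩ := hG.exists_adj_dist_add_one hxr
    refine ⟨G.dist r p, ⟨s(p, x), hp⟩,
      ⟨⟨x, Sym2.mem_mk_left _ _, Sym2.mem_mk_right _ _⟩, depthColor_mk hpx.symm⟩, ?_⟩
    rintro ⟨e', he'⟩ ⟨⟨z, hz, hz'⟩, hc⟩
    apply Subtype.ext
    rcases Sym2.mem_iff.mp hz with rfl | rfl
    · refine (hG.eq_or_depthColor_eq hp hpx he' hz').resolve_right fun h => ?_
      rw [h, ← hpx] at hc
      exact Fin.natCast_add_ne_natCast _ (by norm_num) hc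
    · exfalso
      rcases hG.eq_or_depthColor_eq hadj hxy.symm he' hz' with rfl | h
      · rw [depthColor_mk hxy, ← hpx] at hc
        exact Fin.natCast_add_ne_natCast _ (by norm_num) hc
      · rw [h, hxy, ← hpx, add_assoc] at hc
        exact Fin.natCast_add_ne_natCast _ (by norm_num) hc

end SimpleGraph

/-- Every finite tree has a conflict-free edge coloring with 3 colors such that moreover
every vertex of positive degree is incident to exactly one edge of some color. -/
theorem tree_conflict_free_edge_coloring {V : Type*} [Fintype V]
    (T : SimpleGraph V) (hT : T.IsTree) :
    ∃ f : T.edgeSet → Fin 3,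
      (∀ e : T.edgeSet, ∃ c : Fin 3, ∃! e' : T.edgeSet,
        (∃ v : V, v ∈ (e : Sym2 V) ∧ v ∈ (e' : Sym2 V)) ∧ f e' = c) ∧
      (∀ v : V, (∃ u : V, T.Adj v u) →
        ∃ c : Fin 3, ∃! e : T.edgeSet, v ∈ (e : Sym2 V) ∧ f e = c) := by
  obtain ⟨r, hr⟩ := hT.exists_subsingleton_neighborSet
  exact ⟨fun e => T.depthColor r e, hT.exists_existsUnique_adjacent_depthColor_eq hr,
    fun _ => hT.exists_existsUnique_mem_depthColor_eq hr⟩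
end

section
/- Let H be a finite graph in which every connected component contains at most one cycle. Then the edges of H can be colored with 3 colors so that the coloring is conflict-free (for every edge e there is a color appearing on exactly one edge of the closed edge-neighborhood of e), and moreover for every vertex v of positive degree there is a color c_v such that v is incident to exactly one edge of color c_v. -/
/-!
Orient the graph so that every vertex has at most one out-neighbour, its parent, label the
vertices with three labels and colour each edge by the label of its tail. A few local inequalities
between the labels of a vertex, its parent, its grandparent and its siblings make this colouring
conflict-free. Such labellings are built by peeling off leaves: deleting a leaf edge keeps every
component with at most as many edges as vertices, and the leaf can be re-attached because its
label only has to avoid two values. When no leaf is left, the edge bound forces all degrees to be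
`0` or `2`; then each cycle is oriented cyclically, by choosing one of the two orbits of the
rotation of its darts, and the labels are a proper 3-colouring.
-/

open Function

lemma Fin.exists_ne_and_forall_ne {α : Type*} (a : Fin 3) (f : α → Fin 3) {P : α → Prop}
    (hP : ∀ w w', P w → P w' → w = w') : ∃ c, c ≠ a ∧ ∀ w, P w → c ≠ f w := by
  have two : ∀ a b : Fin 3, ∃ c, c ≠ a ∧ c ≠ b := by decide
  by_cases hw : ∃ w, P w
  · obtain ⟨w, hw⟩ := hw
    obtain ⟨c, hca, hcw⟩ := two a (f w)
    exact ⟨c, hca, fun w' hw' ↦ hP w w' hw hw' ▸ hcw⟩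
  · obtain ⟨c, hca, -⟩ := two a a
    exact ⟨c, hca, fun w hw' ↦ absurd ⟨w, hw'⟩ hw⟩

lemma Set.ncard_diff_singleton_le_of_iff {α β : Type*} {s : Set α} {t : Set β} {a : α} {b : β}
    (hst : s.ncard ≤ t.ncard) (hab : a ∈ s ↔ b ∈ t) :
    (s \ {a}).ncard ≤ (t \ {b}).ncard := by
  by_cases ha : a ∈ s
  · rw [Set.ncard_sdiff_singleton_of_mem ha, Set.ncard_sdiff_singleton_of_mem (hab.1 ha)]
    omega
  · rwa [Set.sdiff_singleton_eq_self ha, Set.sdiff_singleton_eq_self (mt hab.2 ha)]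

lemma Option.exists_eq_some_iff_of_functional {α β : Type*} {R : α → β → Prop}
    (hR : ∀ a b b', R a b → R a b' → b = b') :
    ∃ f : α → Option β, ∀ a b, f a = some b ↔ R a b := by
  classical
  refine ⟨fun a ↦ if h : ∃ b, R a b then some h.choose else none, fun a b ↦ ?_⟩
  by_cases h : ∃ b, R a b
  · simp only [dif_pos h, Option.some.injEq]
    exact ⟨fun hb ↦ hb ▸ h.choose_spec, fun hb ↦ hR a _ _ h.choose_spec hb⟩
  · simp only [dif_neg h, reduceCtorEq, false_iff]
    exact fun hb ↦ h ⟨b, hb⟩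

lemma Setoid.exists_invariant_of_involutive {α : Type*} (r : Setoid α) {τ : α → α}
    (hτ : Involutive τ) (hresp : ∀ {a b}, r a b → r (τ a) (τ b))
    (hne : ∀ a, ¬ r a (τ a)) :
    ∃ P : α → Prop, (∀ {a b}, r a b → (P a ↔ P b)) ∧ ∀ a, P (τ a) ↔ ¬ P a := by
  let : LinearOrder (Quotient r) := WellOrderingRel.isWellOrder.linearOrder
  refine ⟨fun a ↦ Quotient.mk r a < Quotient.mk r (τ a), fun hab ↦ ?_, fun a ↦ ?_⟩
  · simp only [Quotient.sound hab, Quotient.sound (hresp hab)]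
  · have hne' : Quotient.mk r (τ a) ≠ Quotient.mk r a :=
      fun h ↦ hne a (r.symm (Quotient.exact h))
    simp only [hτ a, not_lt]
    exact ⟨le_of_lt, fun h ↦ lt_of_le_of_ne h hne'⟩

namespace SimpleGraph

variable {V : Type*}

lemma colorable_succ_of_forall_ncard_neighborSet_le {G : SimpleGraph V} [Finite V] {k : ℕ}
    (hk : ∀ v, (G.neighborSet v).ncard ≤ k) : G.Colorable (k + 1) := by
  classical
  have := Fintype.ofFinite V
  suffices ∀ s : Finset V, ∃ c : V → Fin (k + 1),
      ∀ a ∈ s, ∀ b ∈ s, G.Adj a b → c a ≠ c b by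
    obtain ⟨c, hc⟩ := this Finset.univ
    exact ⟨Coloring.mk c fun hab ↦ hc _ (Finset.mem_univ _) _ (Finset.mem_univ _) hab⟩
  intro s
  induction s using Finset.induction_on with
  | empty => exact ⟨0, by simp⟩
  | insert x s hxs ih =>
    obtain ⟨c, hc⟩ := ih
    obtain ⟨i, -, hi⟩ : ∃ i ∈ Set.univ, i ∉ c '' G.neighborSet x := by
      refine Set.exists_of_ssubset (Set.ssubset_univ_iff.2 fun h ↦ ?_)
      have := (Set.ncard_image_le (f := c) (G.neighborSet x).toFinite).trans (hk x)
      rw [h, Set.ncard_univ, Nat.card_eq_fintype_card, Fintype.card_fin] at this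
      omega
    refine ⟨update c x i, fun a ha b hb hab ↦ ?_⟩
    simp only [Finset.mem_insert] at ha hb
    rcases ha with rfl | ha <;> rcases hb with rfl | hb
    · exact absurd hab G.irrefl
    · rw [update_self, update_of_ne (ne_of_mem_of_not_mem hb hxs)]
      exact fun h ↦ hi ⟨b, hab, h.symm⟩
    · rw [update_self, update_of_ne (ne_of_mem_of_not_mem ha hxs)]
      exact fun h ↦ hi ⟨a, hab.symm, h⟩
    · rw [update_of_ne (ne_of_mem_of_not_mem ha hxs), update_of_ne (ne_of_mem_of_not_mem hb hxs)]
      exact hc a ha b hb hab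

def ConnectedComponent.edgeSet {H : SimpleGraph V} (K : H.ConnectedComponent) : Set (Sym2 V) :=
  {e ∈ H.edgeSet | ∀ v ∈ e, H.connectedComponentMk v = K}

def IsPseudoforest (H : SimpleGraph V) : Prop :=
  ∀ K : H.ConnectedComponent, K.edgeSet.ncard ≤ K.supp.ncard

section Pseudoforest

variable {H : SimpleGraph V} {x y : V}

open Classical in
lemma ConnectedComponent.sum_ncard_neighborSet [Fintype V] (K : H.ConnectedComponent) :
    ∑ u with u ∈ K.supp, (H.neighborSet u).ncard = 2 * K.edgeSet.ncard := by
  set G := K.toSimpleGraph.spanningCoe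
  have hdeg : ∀ u, G.degree u = if u ∈ K.supp then (H.neighborSet u).ncard else 0 := by
    intro u
    rw [← card_neighborSet_eq_degree, ← Nat.card_eq_fintype_card, Nat.card_coe_set_eq]
    split_ifs with hu
    · congr 1; ext w; simp [G, K.adj_spanningCoe_toSimpleGraph, hu]
    · rw [Set.ncard_eq_zero]; ext w; simp [G, K.adj_spanningCoe_toSimpleGraph, hu]
  have hedges : G.edgeSet = K.edgeSet := by
    ext e
    induction e with
    | _ a b =>
      simp only [mem_edgeSet, G, K.adj_spanningCoe_toSimpleGraph, ConnectedComponent.edgeSet,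
        Set.mem_ofPred_eq, Sym2.mem_iff, forall_eq_or_imp, forall_eq,
        ConnectedComponent.mem_supp_iff]
      constructor
      · rintro ⟨ha, hab⟩
        exact ⟨hab, ha, (ConnectedComponent.sound hab.symm.reachable).trans ha⟩
      · rintro ⟨hab, ha, -⟩
        exact ⟨ha, hab⟩
  have := G.sum_degrees_eq_twice_card_edges
  simp only [hdeg, ← Finset.sum_filter] at this
  rw [this, ← hedges, ← Set.ncard_coe_finset, coe_edgeFinset]

lemma one_lt_ncard_neighborSet [Finite V]
    (hnl : ∀ x y, H.Adj x y → ∃ z, H.Adj x z ∧ z ≠ y) {u a : V} (ha : H.Adj u a) : 1 < (H.neighborSet u).ncard := by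
  obtain ⟨b, hb, hba⟩ := hnl u a ha
  exact (Set.one_lt_ncard_iff).2 ⟨a, b, ha, hb, hba.symm⟩

lemma IsPseudoforest.ncard_neighborSet_le_two [Finite V] (hH : H.IsPseudoforest)
    (hnl : ∀ x y, H.Adj x y → ∃ z, H.Adj x z ∧ z ≠ y) (v : V) :
    (H.neighborSet v).ncard ≤ 2 := by
  classical
  have := Fintype.ofFinite V
  by_contra! hv
  set K := H.connectedComponentMk v
  have hK : ∀ u ∈ K.supp, 2 ≤ (H.neighborSet u).ncard := by
    intro u hu
    obtain ⟨a, ha⟩ : ∃ a, H.Adj u a := by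
      obtain ⟨p⟩ := ConnectedComponent.exact hu
      cases p with
      | nil => exact Set.nonempty_of_ncard_ne_zero (by omega : (H.neighborSet v).ncard ≠ 0)
      | cons h _ => exact ⟨_, h⟩
    exact one_lt_ncard_neighborSet hnl ha
  have hlt : ∑ u with u ∈ K.supp, 2 < ∑ u with u ∈ K.supp, (H.neighborSet u).ncard :=
    Finset.sum_lt_sum (by simpa using hK) ⟨v, by simp [K], hv⟩
  rw [K.sum_ncard_neighborSet, Finset.sum_const, smul_eq_mul, ← Set.ncard_coe_finset,
    Finset.coe_filter_univ] at hlt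
  have := hH K
  simp only [Set.ofPred_mem_eq] at hlt
  omega

lemma Reachable.eq_of_forall_not_adj {u : V} (hx : ∀ z, ¬ H.Adj x z) (h : H.Reachable x u) :
    u = x := by
  obtain ⟨p⟩ := h
  cases p with
  | nil => rfl
  | cons hadj _ => exact absurd hadj (hx _)

lemma Reachable.deleteEdges_of_subsingleton_neighborSet (hx : (H.neighborSet x).Subsingleton)
    {u w : V} (hux : u ≠ x) (hwx : w ≠ x) (h : H.Reachable u w) :
    (H.deleteEdges {s(x, y)}).Reachable u w := by
  obtain ⟨p, hp⟩ := h.exists_isPath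
  have hxp : x ∉ p.support :=
    hp.isTrail.not_mem_support_of_subsingleton_neighborSet hux.symm hwx.symm hx
  exact ⟨p.toDeleteEdge _ fun he ↦ hxp (p.fst_mem_support_of_mem_edges he)⟩

lemma IsPseudoforest.isCycles [Finite V] (hH : H.IsPseudoforest)
    (hnl : ∀ x y, H.Adj x y → ∃ z, H.Adj x z ∧ z ≠ y) : H.IsCycles := by
  rintro v ⟨a, ha⟩
  exact le_antisymm (hH.ncard_neighborSet_le_two hnl v) (one_lt_ncard_neighborSet hnl ha)

lemma not_adj_deleteEdges_of_leaf (hleaf : ∀ z, H.Adj x z → z = y) (z : V) :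
    ¬ (H.deleteEdges {s(x, y)}).Adj x z := fun hz ↦ by
  rw [deleteEdges_adj] at hz
  exact hz.2 (by rw [hleaf z hz.1]; rfl)

lemma IsPseudoforest.deleteEdges_leaf [Finite V] (hH : H.IsPseudoforest) (hxy : H.Adj x y)
    (hleaf : ∀ z, H.Adj x z → z = y) : (H.deleteEdges {s(x, y)}).IsPseudoforest := by
  set H' := H.deleteEdges {s(x, y)}
  have hx' := not_adj_deleteEdges_of_leaf hleaf
  intro K'
  by_cases hxK : x ∈ K'.supp
  · suffices K'.edgeSet = ∅ by simp [this]
    refine Set.eq_empty_of_forall_notMem fun e ⟨he, heK⟩ ↦ ?_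
    induction e with
    | _ a b =>
      have hax : a = x := Reachable.eq_of_forall_not_adj hx' <|
        ConnectedComponent.exact ((heK a (Sym2.mem_mk_left a b)).trans hxK.symm) |>.symm
      rw [hax] at he
      exact hx' b he
  obtain ⟨v₀, rfl⟩ := K'.exists_rep
  have hv₀ : v₀ ≠ x := fun h ↦ hxK (h ▸ rfl)
  set K := H.connectedComponentMk v₀
  have hsupp : K.supp \ {x} ⊆ (H'.connectedComponentMk v₀).supp := by
    rintro w ⟨hw, hwx⟩
    exact ConnectedComponent.sound <| Reachable.deleteEdges_of_subsingleton_neighborSet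
      (fun a ha b hb ↦ (hleaf a ha).trans (hleaf b hb).symm) hwx hv₀
      (ConnectedComponent.exact hw)
  have hedges : (H'.connectedComponentMk v₀).edgeSet ⊆ K.edgeSet \ {s(x, y)} := by
    rintro e ⟨he, heK⟩
    rw [edgeSet_deleteEdges] at he
    refine ⟨⟨he.1, fun v hv ↦ ConnectedComponent.sound ?_⟩, he.2⟩
    exact (ConnectedComponent.exact (heK v hv)).mono (deleteEdges_le _)
  have hxyK : s(x, y) ∈ K.edgeSet ↔ x ∈ K.supp := by
    refine ⟨fun h ↦ h.2 x (Sym2.mem_mk_left x y), fun hx ↦ ⟨hxy, fun v hv ↦ ?_⟩⟩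
    rcases Sym2.mem_iff.1 hv with rfl | rfl
    exacts [hx, (ConnectedComponent.sound hxy.symm.reachable).trans hx]
  calc (H'.connectedComponentMk v₀).edgeSet.ncard ≤ (K.edgeSet \ {s(x, y)}).ncard :=
        Set.ncard_le_ncard hedges (Set.toFinite _)
    _ ≤ (K.supp \ {x}).ncard := Set.ncard_diff_singleton_le_of_iff (hH K) hxyK
    _ ≤ _ := Set.ncard_le_ncard hsupp (Set.toFinite _)

end Pseudoforest

namespace IsCycles

variable {G : SimpleGraph V}

noncomputable def next (hG : G.IsCycles) (d : G.Dart) : V :=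
  (hG.existsUnique_ne_adj d.adj.symm).choose

lemma fst_ne_next (hG : G.IsCycles) (d : G.Dart) : d.fst ≠ hG.next d :=
  (hG.existsUnique_ne_adj d.adj.symm).choose_spec.1.1

lemma adj_next (hG : G.IsCycles) (d : G.Dart) : G.Adj d.snd (hG.next d) :=
  (hG.existsUnique_ne_adj d.adj.symm).choose_spec.1.2

lemma eq_next (hG : G.IsCycles) {d : G.Dart} {w : V} (hw : d.fst ≠ w) (hadj : G.Adj d.snd w) :
    w = hG.next d :=
  (hG.existsUnique_ne_adj d.adj.symm).choose_spec.2 w ⟨hw, hadj⟩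

noncomputable def rotate (hG : G.IsCycles) (d : G.Dart) : G.Dart :=
  ⟨(d.snd, hG.next d), hG.adj_next d⟩

lemma rotate_symm_rotate (hG : G.IsCycles) (d : G.Dart) :
    hG.rotate (hG.rotate d).symm = d.symm := by
  ext
  · rfl
  · exact (hG.eq_next (d := (hG.rotate d).symm) (hG.fst_ne_next d).symm d.adj.symm).symm

noncomputable def rotation (hG : G.IsCycles) : Equiv.Perm G.Dart where
  toFun := hG.rotate
  invFun d := (hG.rotate d.symm).symm
  left_inv d := by simp [hG.rotate_symm_rotate]
  right_inv d := by simpa using hG.rotate_symm_rotate d.symm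

lemma rotation_pow_symm_rotation_pow (hG : G.IsCycles) (k : ℕ) (d : G.Dart) :
    (hG.rotation ^ k) ((hG.rotation ^ k) d).symm = d.symm := by
  induction k generalizing d with
  | zero => simp
  | succ k ih =>
    have hd : (hG.rotation ^ (k + 1)) d = hG.rotate ((hG.rotation ^ k) d) := by
      rw [pow_succ', Equiv.Perm.mul_apply]; rfl
    rw [hd, pow_succ, Equiv.Perm.mul_apply]
    exact (congrArg _ (hG.rotate_symm_rotate _)).trans (ih d)

variable [Finite V]

instance : Finite G.Dart := Finite.of_injective _ Dart.toProd_injective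

/-- If `rotation ^ i` reversed `d`, then by `rotation_pow_symm_rotation_pow` the dart
`rotation ^ k d` would be its own reverse when `i = 2k`, and would be reversed by `rotation` when
`i = 2k + 1`. -/
lemma not_sameCycle_symm (hG : G.IsCycles) (d : G.Dart) : ¬ hG.rotation.SameCycle d d.symm := by
  intro h
  obtain ⟨i, hi⟩ := h.exists_nat_pow_eq
  obtain ⟨k, rfl | rfl⟩ := i.even_or_odd'
  · apply Dart.symm_ne ((hG.rotation ^ k) d)
    apply (hG.rotation ^ k).injective
    rw [hG.rotation_pow_symm_rotation_pow, ← hi, two_mul, pow_add, Equiv.Perm.mul_apply]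
  · set e := (hG.rotation ^ k) d
    apply hG.fst_ne_next e
    have : hG.rotate e = e.symm := by
      apply (hG.rotation ^ k).injective
      rw [hG.rotation_pow_symm_rotation_pow, ← hi, show 2 * k + 1 = k + (1 + k) by ring,
        pow_add, pow_add, pow_one]
      rfl
    exact (congrArg (·.snd) this).symm

lemma sameCycle_symm_symm (hG : G.IsCycles) {d d' : G.Dart} (h : hG.rotation.SameCycle d d') :
    hG.rotation.SameCycle d.symm d'.symm := by
  obtain ⟨k, rfl⟩ := h.exists_nat_pow_eq
  exact Equiv.Perm.SameCycle.symm
    ⟨k, by rw [zpow_natCast]; exact hG.rotation_pow_symm_rotation_pow k d⟩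

/-- Choose, for every orbit of `rotation`, either it or its reverse orbit. -/
lemma exists_orientation (hG : G.IsCycles) :
    ∃ P : G.Dart → Prop, (∀ d, P d.symm ↔ ¬ P d) ∧
    (∀ {d₁ d₂}, P d₁ → P d₂ → d₁.fst = d₂.fst → d₁ = d₂) ∧
    (∀ {d₁ d₂}, P d₁ → P d₂ → d₁.snd = d₂.snd → d₁ = d₂) ∧
    ∀ {v u}, G.Adj v u → ∃ d, P d ∧ d.fst = v := by
  obtain ⟨P, hPσ, hPsymm⟩ :=
    (Equiv.Perm.SameCycle.setoid hG.rotation).exists_invariant_of_involutive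
      Dart.symm_involutive hG.sameCycle_symm_symm hG.not_sameCycle_symm
  have hProt : ∀ d, P (hG.rotate d) ↔ P d := fun d ↦
    (hPσ (Equiv.Perm.SameCycle.refl _ d |>.apply_right)).symm
  have eq_of_fst : ∀ {d₁ d₂}, P d₁ → P d₂ → d₁.fst = d₂.fst → d₁ = d₂ := by
    intro d₁ d₂ h₁ h₂ hfst
    by_contra hne
    have hsnd : d₁.snd ≠ d₂.snd := fun hsnd ↦ hne (Dart.ext _ _ (Prod.ext hfst hsnd))
    have hadj : G.Adj d₁.fst d₂.snd := hfst ▸ d₂.adj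
    have : d₂ = hG.rotate d₁.symm :=
      Dart.ext _ _ (Prod.ext hfst.symm (hG.eq_next (d := d₁.symm) hsnd hadj))
    exact (hPsymm d₁).1 ((hProt _).1 (this ▸ h₂)) h₁
  refine ⟨P, hPsymm, eq_of_fst, fun {d₁ d₂} h₁ h₂ hsnd ↦ hG.rotation.injective <|
    eq_of_fst ((hProt d₁).2 h₁) ((hProt d₂).2 h₂) hsnd, fun {v u} hvu ↦ ?_⟩
  by_cases hd : P ⟨(v, u), hvu⟩
  · exact ⟨_, hd, rfl⟩
  · exact ⟨_, (hProt _).2 ((hPsymm _).2 hd), rfl⟩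

end IsCycles

def IsConflictFreeEdgeColoring {α : Type*} (H : SimpleGraph V) (f : H.edgeSet → α) : Prop :=
  ∀ e : H.edgeSet, ∃ c : α, ∃! e' : H.edgeSet,
    (∃ v : V, v ∈ (e : Sym2 V) ∧ v ∈ (e' : Sym2 V)) ∧ f e' = c

def HasUniqueColorAtVertices {α : Type*} (H : SimpleGraph V) (f : H.edgeSet → α) : Prop :=
  ∀ v : V, (∃ u : V, H.Adj v u) →
    ∃ c : α, ∃! e : H.edgeSet, v ∈ (e : Sym2 V) ∧ f e = c

/-- `par a = some b` orients the edge `ab` from `a` to `b`, so every vertex has at most one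
out-neighbour, its parent; `C` is the set of vertices on the cycles and `ℓ` labels the vertices.
The edge `ab` will receive the colour `ℓ a` of its tail. -/
structure IsCFOrientation (H : SimpleGraph V) (par : V → Option V) (C : Set V)
    (ℓ : V → Fin 3) : Prop where
  adj_iff : ∀ a b, H.Adj a b ↔ par a = some b ∨ par b = some a
  not_parent_of_parent : ∀ {a b}, par a = some b → par b ≠ some a
  label_ne_parent : ∀ {a b}, par a = some b → ℓ a ≠ ℓ b
  eq_of_parent_eq_root : ∀ {r a b}, par r = none → par a = some r → par b = some r → a = b
  label_ne_grandparent : ∀ {z v u}, par z = some v → par v = some u → v ∉ C →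
    ℓ z ≠ ℓ u
  label_ne_cycle_sibling :
    ∀ {z w v}, par z = some v → par w = some v → w ∈ C → z ∉ C → ℓ z ≠ ℓ w
  eq_of_cycle_siblings : ∀ {z w v}, par z = some v → par w = some v → z ∈ C → w ∈ C →
    z = w
  exists_parent_mem : ∀ {v}, v ∈ C → ∃ u ∈ C, par v = some u

noncomputable def tailColoring (H : SimpleGraph V) (par : V → Option V) (ℓ : V → Fin 3)
    (e : H.edgeSet) : Fin 3 :=
  open Classical in
  if h : ∃ a b, par a = some b ∧ (e : Sym2 V) = s(a, b) then ℓ h.choose else 0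

namespace IsCFOrientation

variable {H : SimpleGraph V} {par : V → Option V} {C : Set V} {ℓ : V → Fin 3}

lemma adj_of_parent (h : H.IsCFOrientation par C ℓ) {a b : V} (hab : par a = some b) :
    H.Adj a b :=
  (h.adj_iff a b).2 (Or.inl hab)

lemma exists_tail (h : H.IsCFOrientation par C ℓ) (e : H.edgeSet) :
    ∃ a b, par a = some b ∧ (e : Sym2 V) = s(a, b) := by
  obtain ⟨e, he⟩ := e
  induction e with
  | _ x y =>
    rcases (h.adj_iff x y).1 he with hxy | hyx
    · exact ⟨x, y, hxy, rfl⟩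
    · exact ⟨y, x, hyx, Sym2.eq_swap⟩

lemma tail_eq (h : H.IsCFOrientation par C ℓ) {a b a' b' : V} (hab : par a = some b)
    (hab' : par a' = some b') (he : s(a, b) = s(a', b')) : a = a' := by
  rcases Sym2.eq_iff.1 he with ⟨rfl, -⟩ | ⟨rfl, rfl⟩
  · rfl
  · exact absurd hab' (h.not_parent_of_parent hab)

lemma tailColoring_eq (h : H.IsCFOrientation par C ℓ) {a b : V} (hab : par a = some b)
    {e : H.edgeSet} (he : (e : Sym2 V) = s(a, b)) : tailColoring H par ℓ e = ℓ a := by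
  have hex : ∃ a b, par a = some b ∧ (e : Sym2 V) = s(a, b) := ⟨a, b, hab, he⟩
  obtain ⟨b', hb', he'⟩ := hex.choose_spec
  rw [tailColoring, dif_pos hex, h.tail_eq hb' hab (he' ▸ he)]

lemma existsUnique_tailColoring (h : H.IsCFOrientation par C ℓ) {P : Sym2 V → Prop}
    ⦃t u : V⦄ (htu : par t = some u) (hP : P s(t, u))
    (huniq : ∀ z w, par z = some w → P s(z, w) → ℓ z = ℓ t → z = t) :
    ∃! e : H.edgeSet, P e ∧ tailColoring H par ℓ e = ℓ t := by
  refine ⟨⟨s(t, u), h.adj_of_parent htu⟩, ⟨hP, h.tailColoring_eq htu rfl⟩, ?_⟩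
  rintro e ⟨hPe, hce⟩
  obtain ⟨z, w, hzw, he⟩ := h.exists_tail e
  obtain rfl : z = t := huniq z w hzw (he ▸ hPe) (h.tailColoring_eq hzw he ▸ hce)
  obtain rfl : w = u := Option.some_injective _ (hzw.symm.trans htu)
  exact Subtype.ext he

lemma isConflictFreeEdgeColoring (h : H.IsCFOrientation par C ℓ) :
    H.IsConflictFreeEdgeColoring (tailColoring H par ℓ) := by
  intro e
  obtain ⟨a, b, hab, he⟩ := h.exists_tail e
  have key := h.existsUnique_tailColoring (P := fun e' ↦ ∃ x, x ∈ (e : Sym2 V) ∧ x ∈ e')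
  have touch : ∀ {z w}, (∃ v, v ∈ (e : Sym2 V) ∧ v ∈ s(z, w)) →
      z = a ∨ z = b ∨ w = a ∨ w = b := by
    rintro z w ⟨v, hve, hvzw⟩
    rw [he, Sym2.mem_iff] at hve
    rw [Sym2.mem_iff] at hvzw
    grind
  by_cases haC : a ∈ C
  · refine ⟨ℓ a, key hab ⟨a, by simp [he], by simp⟩ ?_⟩
    intro z w hzw hP hza
    rcases touch hP with rfl | rfl | rfl | rfl
    · rfl
    · exact absurd hza.symm (h.label_ne_parent hab)
    · exact absurd hza (h.label_ne_parent hzw)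
    · by_cases hzC : z ∈ C
      · exact h.eq_of_cycle_siblings hzw hab hzC haC
      · exact absurd hza (h.label_ne_cycle_sibling hzw hab haC hzC)
  cases hb : par b with
  | some c =>
    refine ⟨ℓ b, key hb ⟨b, by simp [he], by simp⟩ ?_⟩
    intro z w hzw hP hzb
    rcases touch hP with rfl | rfl | rfl | rfl
    · exact absurd hzb (h.label_ne_parent hab)
    · rfl
    · exact absurd hzb (h.label_ne_grandparent hzw hab haC)
    · exact absurd hzb (h.label_ne_parent hzw)
  | none =>
    refine ⟨ℓ a, key hab ⟨a, by simp [he], by simp⟩ ?_⟩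
    intro z w hzw hP hza
    rcases touch hP with rfl | rfl | rfl | rfl
    · rfl
    · exact absurd hzw (by simp [hb])
    · exact absurd hza (h.label_ne_parent hzw)
    · exact h.eq_of_parent_eq_root hb hzw hab

lemma hasUniqueColorAtVertices (h : H.IsCFOrientation par C ℓ) :
    H.HasUniqueColorAtVertices (tailColoring H par ℓ) := by
  rintro v ⟨u, hvu⟩
  cases hv : par v with
  | some m =>
    refine ⟨ℓ v, h.existsUnique_tailColoring (P := (v ∈ ·)) hv (Sym2.mem_mk_left v m) ?_⟩
    intro z w hzw hP hzv
    rcases Sym2.mem_iff.1 hP with rfl | rfl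
    · rfl
    · exact absurd hzv (h.label_ne_parent hzw)
  | none =>
    have hu : par u = some v := ((h.adj_iff v u).1 hvu).resolve_left (by simp [hv])
    refine ⟨ℓ u, h.existsUnique_tailColoring (P := (v ∈ ·)) hu (Sym2.mem_mk_right u v) ?_⟩
    intro z w hzw hP _
    rcases Sym2.mem_iff.1 hP with rfl | rfl
    · exact absurd hzw (by simp [hv])
    · exact h.eq_of_parent_eq_root hv hzw hu

lemma root_of_isolated (h : H.IsCFOrientation par C ℓ) {x : V} (hx : ∀ z, ¬ H.Adj x z) :
    par x = none := by
  cases hpx : par x with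
  | none => rfl
  | some b => exact absurd (h.adj_of_parent hpx) (hx b)

variable {x y : V}

lemma sup_edge_of_parent [DecidableEq V] (h : H.IsCFOrientation par C ℓ)
    (hx : ∀ z, ¬ H.Adj x z) (hxy : x ≠ y) {u₀ : V} (hy : par y = some u₀) {c : Fin 3}
    (hcy : c ≠ ℓ y) (hcu : y ∉ C → c ≠ ℓ u₀)
    (hcw : ∀ w ∈ C, par w = some y → c ≠ ℓ w) :
    (H ⊔ edge x y).IsCFOrientation (update par x (some y)) C (update ℓ x c) := by
  -- `x` is a root without children, so the only new constraints are those on its label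
  have hxr := h.root_of_isolated hx
  have hxl : ∀ z, par z ≠ some x := fun z hz ↦ hx z (h.adj_of_parent hz).symm
  constructor
  · intro a b
    simp only [sup_adj, edge_adj, update_apply]
    grind [h.adj_iff]
  all_goals intros; simp only [update_apply] at *
  all_goals grind [h.not_parent_of_parent, h.label_ne_parent, h.eq_of_parent_eq_root,
    h.label_ne_grandparent, h.label_ne_cycle_sibling, h.eq_of_cycle_siblings, h.exists_parent_mem]

lemma sup_edge_of_root [DecidableEq V] (h : H.IsCFOrientation par C ℓ)
    (hx : ∀ z, ¬ H.Adj x z) (hxy : x ≠ y) (hy : par y = none) {c : Fin 3} (hcy : c ≠ ℓ y)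
    (hcw : ∀ w, par w = some y → c ≠ ℓ w) :
    (H ⊔ edge x y).IsCFOrientation (update par y (some x)) C (update ℓ x c) := by
  have hxr := h.root_of_isolated hx
  have hxl : ∀ z, par z ≠ some x := fun z hz ↦ hx z (h.adj_of_parent hz).symm
  constructor
  · intro a b
    simp only [sup_adj, edge_adj, update_apply]
    grind [h.adj_iff]
  all_goals intros; simp only [update_apply] at *
  all_goals grind [h.not_parent_of_parent, h.label_ne_parent, h.eq_of_parent_eq_root,
    h.label_ne_grandparent, h.label_ne_cycle_sibling, h.eq_of_cycle_siblings, h.exists_parent_mem]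

lemma exists_sup_edge (h : H.IsCFOrientation par C ℓ) (hx : ∀ z, ¬ H.Adj x z) (hxy : x ≠ y) :
    ∃ par' ℓ', (H ⊔ edge x y).IsCFOrientation par' C ℓ' := by
  classical
  cases hy : par y with
  | some u₀ =>
    obtain ⟨c, hcy, hc⟩ := Fin.exists_ne_and_forall_ne (ℓ y) ℓ
      (P := fun w ↦ (w ∈ C ∧ par w = some y) ∨ (y ∉ C ∧ w = u₀))
      (by grind [h.exists_parent_mem, h.eq_of_cycle_siblings])
    exact ⟨_, _, h.sup_edge_of_parent hx hxy hy hcy (fun hyC ↦ hc u₀ (.inr ⟨hyC, rfl⟩))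
      fun w hwC hwy ↦ hc w (.inl ⟨hwC, hwy⟩)⟩
  | none =>
    obtain ⟨c, hcy, hc⟩ := Fin.exists_ne_and_forall_ne (ℓ y) ℓ
      (P := fun w ↦ par w = some y) fun _ _ ↦ h.eq_of_parent_eq_root hy
    exact ⟨_, _, h.sup_edge_of_root hx hxy hy hcy hc⟩

end IsCFOrientation

lemma IsCycles.exists_parent [Finite V] {G : SimpleGraph V} (hG : G.IsCycles) :
    ∃ par : V → Option V, (∀ a b, G.Adj a b ↔ par a = some b ∨ par b = some a) ∧
      (∀ {a b}, par a = some b → par b ≠ some a) ∧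
      (∀ {a b v}, par a = some v → par b = some v → a = b) ∧
      ∀ {v u}, G.Adj v u → ∃ w, par v = some w := by
  obtain ⟨P, hPsymm, eq_of_fst, eq_of_snd, exists_fst⟩ := hG.exists_orientation
  obtain ⟨par, par_eq_some⟩ := Option.exists_eq_some_iff_of_functional
    (R := fun a b ↦ ∃ d, P d ∧ d.fst = a ∧ d.snd = b)
    fun a b b' ⟨d, hd, hda, hdb⟩ ⟨d', hd', hda', hdb'⟩ ↦
      hdb ▸ hdb' ▸ congrArg (·.snd) (eq_of_fst hd hd' (hda.trans hda'.symm))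
  refine ⟨par, fun a b ↦ ⟨fun hab ↦ ?_, ?_⟩, ?_, ?_, fun {v u} hvu ↦ ?_⟩
  · by_cases hd : P ⟨(a, b), hab⟩
    · exact .inl ((par_eq_some _ _).2 ⟨_, hd, rfl, rfl⟩)
    · exact .inr ((par_eq_some _ _).2 ⟨_, (hPsymm _).2 hd, rfl, rfl⟩)
  · rintro (h | h) <;> obtain ⟨d, -, rfl, rfl⟩ := (par_eq_some _ _).1 h
    exacts [d.adj, d.adj.symm]
  · intro a b hab hba
    obtain ⟨d, hd, rfl, rfl⟩ := (par_eq_some _ _).1 hab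
    obtain ⟨d', hd', h₁, h₂⟩ := (par_eq_some _ _).1 hba
    obtain rfl : d' = d.symm := Dart.ext _ _ (Prod.ext h₁ h₂)
    exact (hPsymm d).1 hd' hd
  · intro a b v hav hbv
    obtain ⟨d, hd, rfl, rfl⟩ := (par_eq_some _ _).1 hav
    obtain ⟨d', hd', rfl, h⟩ := (par_eq_some _ _).1 hbv
    rw [eq_of_snd hd hd' h.symm]
  · obtain ⟨d, hd, rfl⟩ := exists_fst hvu
    exact ⟨d.snd, (par_eq_some _ _).2 ⟨d, hd, rfl, rfl⟩⟩

lemma IsCycles.exists_cfOrientation [Finite V] {G : SimpleGraph V} (hG : G.IsCycles) :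
    ∃ par C ℓ, G.IsCFOrientation par C ℓ := by
  obtain ⟨par, adj_iff, not_parent_of_parent, eq_of_parent_eq, exists_par⟩ := hG.exists_parent
  obtain ⟨ℓ⟩ : G.Colorable 3 := colorable_succ_of_forall_ncard_neighborSet_le fun v ↦ by
    rcases (G.neighborSet v).eq_empty_or_nonempty with h | h
    · simp [h]
    · exact (hG h).le
  have adj_of_par : ∀ {a b}, par a = some b → G.Adj a b :=
    fun hab ↦ (adj_iff _ _).2 (.inl hab)
  refine ⟨par, {v | ∃ u, G.Adj v u}, ℓ, adj_iff, not_parent_of_parent,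
    fun hab ↦ ℓ.valid (adj_of_par hab), fun hr har _ ↦ ?_, fun _ hvu hvC ↦ ?_,
    fun hzv _ _ hzC ↦ ?_, fun hzv hwv _ _ ↦ eq_of_parent_eq hzv hwv, ?_⟩
  · obtain ⟨w, hw⟩ := exists_par (adj_of_par har).symm
    simp [hr] at hw
  · exact absurd ⟨_, adj_of_par hvu⟩ hvC
  · exact absurd ⟨_, adj_of_par hzv⟩ hzC
  · rintro v ⟨u, hvu⟩
    obtain ⟨w, hw⟩ := exists_par hvu
    exact ⟨w, ⟨v, (adj_of_par hw).symm⟩, hw⟩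

lemma deleteEdges_sup_edge {H : SimpleGraph V} {x y : V} (hxy : H.Adj x y) :
    H.deleteEdges {s(x, y)} ⊔ edge x y = H := by
  ext a b
  simp only [sup_adj, deleteEdges_adj, edge_adj, Set.mem_singleton_iff, Sym2.eq_iff]
  grind [H.adj_symm, H.ne_of_adj]

lemma IsPseudoforest.exists_cfOrientation [Finite V] {H : SimpleGraph V} (hH : H.IsPseudoforest) :
    ∃ par C ℓ, H.IsCFOrientation par C ℓ := by
  induction hn : H.edgeSet.ncard using Nat.strong_induction_on generalizing H with
  | _ n ih =>
    by_cases hleaf : ∃ x y, H.Adj x y ∧ ∀ z, H.Adj x z → z = y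
    · obtain ⟨x, y, hxy, hleaf⟩ := hleaf
      have hlt : (H.deleteEdges {s(x, y)}).edgeSet.ncard < n := by
        rw [← hn, edgeSet_deleteEdges]
        exact Set.ncard_sdiff_singleton_lt_of_mem hxy (Set.toFinite _)
      obtain ⟨par, C, ℓ, h⟩ := ih _ hlt (hH.deleteEdges_leaf hxy hleaf) rfl
      obtain ⟨par', ℓ', h'⟩ := h.exists_sup_edge (not_adj_deleteEdges_of_leaf hleaf) hxy.ne
      exact ⟨par', C, ℓ', deleteEdges_sup_edge hxy ▸ h'⟩
    · push Not at hleaf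
      exact (hH.isCycles hleaf).exists_cfOrientation

end SimpleGraph

/-- If every connected component of a finite graph `H` contains at most one cycle
(i.e. has at most as many edges as vertices), then `H` has a conflict-free edge coloring
with 3 colors such that moreover every vertex of positive degree is incident to exactly
one edge of some color. -/
theorem unicyclic_components_conflict_free_edge_coloring {V : Type*} [Finite V]
    (H : SimpleGraph V)
    (hH : ∀ K : H.ConnectedComponent,
      {e ∈ H.edgeSet | ∀ v ∈ e, H.connectedComponentMk v = K}.ncard ≤ K.supp.ncard) :
    ∃ f : H.edgeSet → Fin 3,
      (∀ e : H.edgeSet, ∃ c : Fin 3, ∃! e' : H.edgeSet,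
        (∃ v : V, v ∈ (e : Sym2 V) ∧ v ∈ (e' : Sym2 V)) ∧ f e' = c) ∧
      (∀ v : V, (∃ u : V, H.Adj v u) →
        ∃ c : Fin 3, ∃! e : H.edgeSet, v ∈ (e : Sym2 V) ∧ f e = c) := by
  obtain ⟨par, C, ℓ, h⟩ := SimpleGraph.IsPseudoforest.exists_cfOrientation hH
  exact ⟨_, h.isConflictFreeEdgeColoring, h.hasUniqueColorAtVertices⟩
end

section
/- Let f be an edge coloring of K_n, and let A ⊆ V(K_n) be a set of vertices all of which have the same palette (the same set of colors on incident edges). If an edge uv with u,v ∈ A is satisfied by f with color c (i.e., exactly one edge of the closed edge-neighborhood of uv has color c), then f(uv) = c and uv is the only edge of color c incident to u or to v. -/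
/-- The palette of a vertex `v` under an edge coloring `f` of `K_n`. -/
def palette {n : ℕ} {C : Type*} (f : (⊤ : SimpleGraph (Fin n)).edgeSet → C) (v : Fin n) :
    Set C :=
  {c | ∃ e : (⊤ : SimpleGraph (Fin n)).edgeSet, v ∈ (e : Sym2 (Fin n)) ∧ f e = c}

/-- If all vertices of `A` have the same palette and the edge `uv` (with `u, v ∈ A`) is
satisfied with color `c`, then `f(uv) = c` and `uv` is the only edge of color `c`
incident to `u` or to `v`. -/
theorem satisfied_edge_in_palette_class {n : ℕ} {C : Type*}
    (f : (⊤ : SimpleGraph (Fin n)).edgeSet → C) (A : Set (Fin n))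
    (hA : ∀ u ∈ A, ∀ v ∈ A, palette f u = palette f v)
    (u v : Fin n) (hu : u ∈ A) (hv : v ∈ A) (huv : u ≠ v) (c : C)
    (hsat : ∃! e' : (⊤ : SimpleGraph (Fin n)).edgeSet,
      (∃ w : Fin n, w ∈ (s(u, v) : Sym2 (Fin n)) ∧ w ∈ (e' : Sym2 (Fin n))) ∧ f e' = c) :
    f ⟨s(u, v), by simp [huv]⟩ = c ∧
    ∀ e' : (⊤ : SimpleGraph (Fin n)).edgeSet,
      (u ∈ (e' : Sym2 (Fin n)) ∨ v ∈ (e' : Sym2 (Fin n))) → f e' = c →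
        (e' : Sym2 (Fin n)) = s(u, v) := by
  obtain ⟨e0, ⟨⟨w, hw, hwe⟩, hfe0⟩, huniq⟩ := hsat
  -- e0 contains u and v
  have key : (e0 : Sym2 (Fin n)) = s(u, v) := by
    have hwuv : w = u ∨ w = v := by simpa using hw
    -- c is in palette of both u and v, get edges through u and through v
    have hpal : palette f u = palette f v := hA u hu v hv
    have hu' : ∃ eu : (⊤ : SimpleGraph (Fin n)).edgeSet,
        u ∈ (eu : Sym2 (Fin n)) ∧ f eu = c := by
      rcases hwuv with rfl | rfl
      · exact ⟨e0, hwe, hfe0⟩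
      · have : c ∈ palette f w := ⟨e0, hwe, hfe0⟩
        rw [← hpal] at this
        exact this
    have hv' : ∃ ev : (⊤ : SimpleGraph (Fin n)).edgeSet,
        v ∈ (ev : Sym2 (Fin n)) ∧ f ev = c := by
      rcases hwuv with rfl | rfl
      · have : c ∈ palette f w := ⟨e0, hwe, hfe0⟩
        rw [hpal] at this
        exact this
      · exact ⟨e0, hwe, hfe0⟩
    obtain ⟨eu, hueu, hfeu⟩ := hu'
    obtain ⟨ev, hvev, hfev⟩ := hv'
    have heu : eu = e0 := huniq eu ⟨⟨u, by simp, hueu⟩, hfeu⟩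
    have hev : ev = e0 := huniq ev ⟨⟨v, by simp, hvev⟩, hfev⟩
    subst heu
    rw [hev] at hvev
    exact (Sym2.mem_and_mem_iff huv).mp ⟨hueu, hvev⟩
  constructor
  · have : (⟨s(u, v), by simp [huv]⟩ : (⊤ : SimpleGraph (Fin n)).edgeSet) = e0 := by
      exact Subtype.ext key.symm
    rw [this]; exact hfe0
  · intro e' he' hfe'
    have : e' = e0 := by
      refine huniq e' ⟨?_, hfe'⟩
      rcases he' with h | h
      · exact ⟨u, by simp, h⟩
      · exact ⟨v, by simp, h⟩
    rw [this, key]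
end

section
/- Let f be an edge coloring of K_n, let A be a set of vertices with identical palettes, and let c be a color. Then the set of edges with both endpoints in A that are satisfied by f with color c forms a matching (no two of these edges share a vertex). -/
/-- The edge `e` is satisfied by `f` with color `c`: exactly one edge of the closed
edge-neighborhood of `e` has color `c`. -/
def SatisfiedWith {n : ℕ} {C : Type*} (f : (⊤ : SimpleGraph (Fin n)).edgeSet → C)
    (e : (⊤ : SimpleGraph (Fin n)).edgeSet) (c : C) : Prop :=
  ∃! e' : (⊤ : SimpleGraph (Fin n)).edgeSet,
    (∃ w : Fin n, w ∈ (e : Sym2 (Fin n)) ∧ w ∈ (e' : Sym2 (Fin n))) ∧ f e' = c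

/-- Among vertices with identical palettes, the edges with both endpoints in `A` that are
satisfied with a fixed color `c` form a matching. -/
theorem satisfied_edges_form_matching {n : ℕ} {C : Type*}
    (f : (⊤ : SimpleGraph (Fin n)).edgeSet → C) (A : Set (Fin n))
    (hA : ∀ u ∈ A, ∀ v ∈ A, palette f u = palette f v) (c : C) :
    ∀ e₁ e₂ : (⊤ : SimpleGraph (Fin n)).edgeSet,
      (∀ w ∈ (e₁ : Sym2 (Fin n)), w ∈ A) → SatisfiedWith f e₁ c →
      (∀ w ∈ (e₂ : Sym2 (Fin n)), w ∈ A) → SatisfiedWith f e₂ c →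
      (∃ w : Fin n, w ∈ (e₁ : Sym2 (Fin n)) ∧ w ∈ (e₂ : Sym2 (Fin n))) → e₁ = e₂ := by
  have key : ∀ e : (⊤ : SimpleGraph (Fin n)).edgeSet,
      (∀ w ∈ (e : Sym2 (Fin n)), w ∈ A) → SatisfiedWith f e c →
      f e = c ∧ ∀ a : (⊤ : SimpleGraph (Fin n)).edgeSet,
        ((∃ w : Fin n, w ∈ (e : Sym2 (Fin n)) ∧ w ∈ (a : Sym2 (Fin n))) ∧ f a = c) →
        a = e := by
    intro e hmem hsat
    obtain ⟨a₀, ⟨⟨x, hxe, hxa⟩, ha₀⟩, huniq⟩ := hsat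
    -- every vertex of A has c in its palette
    have hpal : ∀ z ∈ A, c ∈ palette f z := by
      intro z hz
      rw [← hA x (hmem x hxe) z hz]
      exact ⟨a₀, hxa, ha₀⟩
    -- every endpoint of e lies on a₀
    have hend : ∀ z ∈ (e : Sym2 (Fin n)), z ∈ (a₀ : Sym2 (Fin n)) := by
      intro z hze
      obtain ⟨b, hzb, hbc⟩ := hpal z (hmem z hze)
      have hb : b = a₀ := huniq b ⟨⟨z, hze, hzb⟩, hbc⟩
      rw [← hb]; exact hzb
    -- decompose e into its two distinct endpoints
    obtain ⟨⟨p, q⟩, hpq⟩ := Quot.exists_rep (e : Sym2 (Fin n))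
    have hpqe : (e : Sym2 (Fin n)) = s(p, q) := hpq.symm
    have hne : p ≠ q := by
      have := e.prop
      rw [hpqe, SimpleGraph.mem_edgeSet] at this
      exact this
    have hp : p ∈ (a₀ : Sym2 (Fin n)) := hend p (by rw [hpqe]; exact Sym2.mem_mk_left p q)
    have hq : q ∈ (a₀ : Sym2 (Fin n)) := hend q (by rw [hpqe]; exact Sym2.mem_mk_right p q)
    have ha₀e : a₀ = e := by
      apply Subtype.ext
      rw [(Sym2.mem_and_mem_iff hne).mp ⟨hp, hq⟩, hpqe]
    constructor
    · rw [← ha₀e]; exact ha₀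
    · intro a ha
      rw [← ha₀e]
      exact huniq a ha
  intro e₁ e₂ h1A h1s h2A h2s hshared
  obtain ⟨hfe₂, -⟩ := key e₂ h2A h2s
  obtain ⟨-, huniq₁⟩ := key e₁ h1A h1s
  exact (huniq₁ e₂ ⟨hshared, hfe₂⟩).symm
end

section
/- Let H be a graph with maximum degree Δ ≥ Δ₀ (for a suitable absolute constant Δ₀). Then there exist a set S ⊆ E(H) and a coloring f of S with 9 colors such that every edge of S is satisfied by f, and the graph obtained from H by deleting all edges satisfied by f has maximum degree at most (1 − e^{−4})·Δ. -/
/-- An edge `e` is satisfied by the partial edge coloring of the set `S` by `f` if some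
color appears on exactly one edge of `S` sharing a vertex with `e`. -/
def EdgeSatisfied {V : Type*} (S : Set (Sym2 V)) (f : Sym2 V → Fin 9) (e : Sym2 V) :
    Prop :=
  ∃ c : Fin 9, ∃! e' : Sym2 V, e' ∈ S ∧ (∃ v : V, v ∈ e ∧ v ∈ e') ∧ f e' = c

open Finset in
private lemma card_filter_fst {V : Type} [Fintype V] [DecidableEq V] (v : V) (R : V → Prop)
    [DecidablePred R] :
    (Finset.univ.filter fun p : V × V => p.1 = v ∧ R p.2).card
      = (Finset.univ.filter R).card := by
  have h : (Finset.univ.filter fun p : V × V => p.1 = v ∧ R p.2)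
      = ({v} : Finset V) ×ˢ Finset.univ.filter R := by
    ext p
    simp only [Finset.mem_filter, Finset.mem_univ, true_and, Finset.mem_product,
      Finset.mem_singleton]
  rw [h, Finset.card_product, Finset.card_singleton, one_mul]

private lemma card_filter_snd {V : Type} [Fintype V] [DecidableEq V] (v : V) (R : V → Prop)
    [DecidablePred R] :
    (Finset.univ.filter fun p : V × V => p.2 = v ∧ R p.1).card
      = (Finset.univ.filter R).card := by
  have h : (Finset.univ.filter fun p : V × V => p.2 = v ∧ R p.1)
      = Finset.univ.filter R ×ˢ ({v} : Finset V) := by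
    ext p
    simp only [Finset.mem_filter, Finset.mem_univ, true_and, Finset.mem_product,
      Finset.mem_singleton]
    tauto
  rw [h, Finset.card_product, Finset.card_singleton, mul_one]

set_option maxHeartbeats 2000000 in
/-- Degree-reduction lemma: there is an absolute constant `Δ₀` such that every graph `H`
of maximum degree `Δ ≥ Δ₀` admits a set `S` of edges and a coloring `f` of `S` with `9`
colors such that every edge of `S` is satisfied by `f`, and deleting all satisfied edges
leaves a graph of maximum degree at most `(1 − e^{−4})·Δ`. -/
theorem degree_reduction_lemma :
    ∃ Δ₀ : ℕ, 0 < Δ₀ ∧ ∀ (V : Type) [Fintype V] (H : SimpleGraph V) [DecidableRel H.Adj],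
      Δ₀ ≤ H.maxDegree →
      ∃ (S : Set (Sym2 V)) (f : Sym2 V → Fin 9), S ⊆ H.edgeSet ∧
        (∀ e ∈ S, EdgeSatisfied S f e) ∧
        ∀ v : V,
          (((H.deleteEdges {e ∈ H.edgeSet | EdgeSatisfied S f e}).neighborSet v).ncard : ℝ)
            ≤ (1 - Real.exp (-4)) * H.maxDegree := by
  classical
  refine ⟨1, Nat.one_pos, ?_⟩
  intro V _ H _ hΔ0
  -- numeric facts
  have hexp1 : Real.exp (-4) ≤ 1 := by
    rw [Real.exp_le_one_iff]; norm_num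
  have hexp2 : (2:ℝ)/9 ≤ 1 - Real.exp (-4) := by
    have h1 : Real.exp (-4) * Real.exp 4 = 1 := by
      rw [← Real.exp_add]; norm_num
    have h2 : (5:ℝ) ≤ Real.exp 4 := by
      have := Real.add_one_le_exp (4:ℝ); linarith
    nlinarith [Real.exp_pos (-4:ℝ)]
  -- a maximum matching
  obtain ⟨M, hMmem, hMmax⟩ := Finset.exists_max_image
    ((Finset.univ : Finset (Finset (Sym2 V))).filter fun N =>
      (∀ e ∈ N, e ∈ H.edgeSet) ∧ ∀ e ∈ N, ∀ e' ∈ N, e ≠ e' → ∀ x, x ∈ e → x ∉ e')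
    Finset.card ⟨∅, by simp⟩
  rw [Finset.mem_filter] at hMmem
  obtain ⟨-, hMedge, hMdisj⟩ := hMmem
  -- the matching-edge function
  set g : V → Option (Sym2 V) := fun v =>
    if h : ∃ m ∈ M, v ∈ m then some h.choose else none with hgdef
  have hg1 : ∀ v m, g v = some m → m ∈ M ∧ v ∈ m := by
    intro v m h
    simp only [hgdef] at h
    split_ifs at h with hex
    · obtain ⟨h1, h2⟩ := hex.choose_spec
      injection h with h; rw [← h]; exact ⟨h1, h2⟩
  have hg2 : ∀ v m, m ∈ M → v ∈ m → g v = some m := by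
    intro v m hmM hvm
    have hex : ∃ m ∈ M, v ∈ m := ⟨m, hmM, hvm⟩
    have hch := hex.choose_spec
    have heq : hex.choose = m := by
      by_contra hne
      exact hMdisj _ hch.1 _ hmM hne v hch.2 hvm
    simp only [hgdef, dif_pos hex, heq]
  have hg3 : ∀ v, g v = none → ∀ m ∈ M, v ∉ m := by
    intro v hv m hm hvm
    rw [hg2 v m hm hvm] at hv
    cases hv
  have hmem_eq : ∀ (x : V), ∀ m' ∈ M, x ∈ m' → ∀ m'' ∈ M, x ∈ m'' → m' = m'' := by
    intro x m' h1 h2 m'' h3 h4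
    by_contra hne
    exact hMdisj _ h1 _ h3 hne x h2 h4
  -- the minimizing coloring
  obtain ⟨f, hfmin⟩ := Finite.exists_min (fun f : Sym2 V → Fin 9 =>
    (Finset.univ.filter fun p : V × V => H.Adj p.1 p.2 ∧ ∃ m1 m2, g p.1 = some m1 ∧
      g p.2 = some m2 ∧ m1 ≠ m2 ∧ f m1 = f m2).card)
  -- edges of the matching are satisfied
  have satM : ∀ m ∈ M, EdgeSatisfied (↑M) f m := by
    intro m hm
    refine ⟨f m, m, ⟨by exact_mod_cast hm, ⟨m.out.1, Sym2.out_fst_mem m, Sym2.out_fst_mem m⟩,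
      rfl⟩, ?_⟩
    rintro e' ⟨he'M, ⟨x, hxm, hxe'⟩, -⟩
    exact hmem_eq x e' (by exact_mod_cast he'M) hxe' m hm hxm
  -- a general satisfaction construction
  have satW : ∀ (a b : V), ∀ m₀ ∈ M, (a ∈ m₀ ∨ b ∈ m₀) →
      (∀ e' ∈ M, (∃ x : V, x ∈ s(a,b) ∧ x ∈ e') → f e' = f m₀ → e' = m₀) →
      EdgeSatisfied (↑M) f s(a,b) := by
    intro a b m₀ hm₀ hab huni
    refine ⟨f m₀, m₀, ⟨by exact_mod_cast hm₀, ?_, rfl⟩, ?_⟩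
    · rcases hab with h | h
      · exact ⟨a, Sym2.mem_mk_left a b, h⟩
      · exact ⟨b, Sym2.mem_mk_right a b, h⟩
    · rintro e' ⟨h1, h2, h3⟩
      exact huni e' (by exact_mod_cast h1) h2 h3
  refine ⟨↑M, f, ?_, ?_, ?_⟩
  · intro e he
    exact hMedge e (by exact_mod_cast he)
  · intro e he
    exact satM e (by exact_mod_cast he)
  intro v
  have hRHS0 : (0:ℝ) ≤ (1 - Real.exp (-4)) * H.maxDegree :=
    mul_nonneg (by linarith) (Nat.cast_nonneg _)
  cases hv : g v with
  | none =>
    -- every edge at v is satisfied, so the remaining neighbor set is empty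
    have hall : ∀ w, H.Adj v w → EdgeSatisfied (↑M) f s(v,w) := by
      intro w hvw
      cases hw : g w with
      | some m2 =>
        obtain ⟨hm2M, hm2w⟩ := hg1 w m2 hw
        refine satW v w m2 hm2M (Or.inr hm2w) ?_
        rintro e' he' ⟨x, hx1, hx2⟩ -
        rcases Sym2.mem_iff.mp hx1 with rfl | rfl
        · exact absurd hx2 (hg3 x hv e' he')
        · exact hmem_eq x e' he' hx2 m2 hm2M hm2w
      | none =>
        exfalso
        have hvin : v ∈ s(v,w) := Sym2.mem_mk_left v w
        have hnotin : s(v,w) ∉ M := fun h => hg3 v hv _ h hvin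
        have hP' : (∀ e ∈ insert s(v,w) M, e ∈ H.edgeSet) ∧
            ∀ e ∈ insert s(v,w) M, ∀ e' ∈ insert s(v,w) M, e ≠ e' → ∀ x, x ∈ e → x ∉ e' := by
          constructor
          · intro e he
            rcases Finset.mem_insert.mp he with rfl | he
            · exact H.mem_edgeSet.mpr hvw
            · exact hMedge e he
          · intro e he e' he' hne x hxe hxe'
            rcases Finset.mem_insert.mp he with rfl | hb
            · rcases Finset.mem_insert.mp he' with rfl | hb'
              · exact hne rfl
              · rcases Sym2.mem_iff.mp hxe with h1 | h1 <;> subst h1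
                · exact hg3 _ hv e' hb' hxe'
                · exact hg3 _ hw e' hb' hxe'
            · rcases Finset.mem_insert.mp he' with rfl | hb'
              · rcases Sym2.mem_iff.mp hxe' with h1 | h1 <;> subst h1
                · exact hg3 _ hv e hb hxe
                · exact hg3 _ hw e hb hxe
              · exact hMdisj e hb e' hb' hne x hxe hxe'
        have hle := hMmax _ (Finset.mem_filter.mpr ⟨Finset.mem_univ _, hP'⟩)
        rw [Finset.card_insert_of_notMem hnotin] at hle
        omega
    have hempty : (H.deleteEdges {e ∈ H.edgeSet | EdgeSatisfied (↑M) f e}).neighborSet v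
        = ∅ := by
      refine Set.eq_empty_iff_forall_notMem.mpr fun w hw => ?_
      rw [SimpleGraph.mem_neighborSet, SimpleGraph.deleteEdges_adj] at hw
      exact hw.2 (Set.mem_sep (H.mem_edgeSet.mpr hw.1) (hall w hw.1))
    rw [hempty]
    simp only [Set.ncard_empty, Nat.cast_zero]; exact hRHS0
  | some m =>
    obtain ⟨hmM, hvm⟩ := hg1 v m hv
    obtain ⟨u, hmu⟩ := Sym2.mem_iff_exists.mp hvm
    have hvu : H.Adj v u := H.mem_edgeSet.mp (hmu ▸ hMedge m hmM)
    have hvune : v ≠ u := H.ne_of_adj hvu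
    have humem : u ∈ m := by rw [hmu]; exact Sym2.mem_mk_right v u
    have hgu : g u = some m := hg2 u m hmM humem
    have hgm : ∀ x, g x = some m ↔ (x = v ∨ x = u) := by
      intro x
      constructor
      · intro h
        have hx := (hg1 x m h).2
        rw [hmu] at hx
        exact Sym2.mem_iff.mp hx
      · rintro (rfl | rfl)
        · exact hv
        · exact hgu
    -- key inequality from minimality of the coloring f
    have key : ∀ c : Fin 9,
        (Finset.univ.filter fun w => H.Adj v w ∧ ∃ m', g w = some m' ∧ m' ≠ m ∧ f m' = f m).card
        + (Finset.univ.filter fun w => H.Adj u w ∧ ∃ m', g w = some m' ∧ m' ≠ m ∧ f m' = f m).card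
        ≤ (Finset.univ.filter fun w => H.Adj v w ∧ ∃ m', g w = some m' ∧ m' ≠ m ∧ f m' = c).card
        + (Finset.univ.filter fun w => H.Adj u w ∧ ∃ m', g w = some m' ∧ m' ≠ m ∧ f m' = c).card := by
      intro c
      set f' : Sym2 V → Fin 9 := Function.update f m c with hf'def
      have hf'm : f' m = c := Function.update_self m c f
      have hf'ne : ∀ m', m' ≠ m → f' m' = f m' := fun m' h => Function.update_of_ne h c f
      -- generic counting of the pairs involving the edge m
      have hQcount : ∀ h : Sym2 V → Fin 9,
          (Finset.univ.filter fun p : V × V => (H.Adj p.1 p.2 ∧ ∃ m1 m2, g p.1 = some m1 ∧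
              g p.2 = some m2 ∧ m1 ≠ m2 ∧ h m1 = h m2) ∧
              (g p.1 = some m ∨ g p.2 = some m)).card
          = ((Finset.univ.filter fun w => H.Adj v w ∧ ∃ m', g w = some m' ∧ m' ≠ m ∧
                h m' = h m).card
            + (Finset.univ.filter fun w => H.Adj u w ∧ ∃ m', g w = some m' ∧ m' ≠ m ∧
                h m' = h m).card)
            + ((Finset.univ.filter fun w => H.Adj v w ∧ ∃ m', g w = some m' ∧ m' ≠ m ∧
                h m' = h m).card
            + (Finset.univ.filter fun w => H.Adj u w ∧ ∃ m', g w = some m' ∧ m' ≠ m ∧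
                h m' = h m).card) := by
        intro h
        have e1 : (Finset.univ.filter fun p : V × V => (H.Adj p.1 p.2 ∧ ∃ m1 m2,
              g p.1 = some m1 ∧ g p.2 = some m2 ∧ m1 ≠ m2 ∧ h m1 = h m2) ∧
              (g p.1 = some m ∨ g p.2 = some m))
            = Finset.univ.filter fun p : V × V =>
              (g p.1 = some m ∧ H.Adj p.1 p.2 ∧ ∃ m2, g p.2 = some m2 ∧ m2 ≠ m ∧ h m2 = h m)
              ∨ (g p.2 = some m ∧ H.Adj p.1 p.2 ∧ ∃ m1, g p.1 = some m1 ∧ m1 ≠ m ∧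
                  h m1 = h m) := by
          refine Finset.filter_congr fun p _ => ?_
          constructor
          · rintro ⟨⟨hadj, m1, m2, h1, h2, hne, hcol⟩, hq | hq⟩
            · have hm1 : m1 = m := by rw [h1] at hq; exact Option.some.inj hq
              subst hm1
              exact Or.inl ⟨hq, hadj, m2, h2, Ne.symm hne, hcol.symm⟩
            · have hm2 : m2 = m := by rw [h2] at hq; exact Option.some.inj hq
              subst hm2
              exact Or.inr ⟨hq, hadj, m1, h1, hne, hcol⟩
          · rintro (⟨hq, hadj, m2, h2, hne, hcol⟩ | ⟨hq, hadj, m1, h1, hne, hcol⟩)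
            · exact ⟨⟨hadj, m, m2, hq, h2, Ne.symm hne, hcol.symm⟩, Or.inl hq⟩
            · exact ⟨⟨hadj, m1, m, h1, hq, hne, hcol⟩, Or.inr hq⟩
        rw [e1, Finset.filter_or, Finset.card_union_of_disjoint ?dj]
        case dj =>
          rw [Finset.disjoint_left]
          intro p hp1 hp2
          rw [Finset.mem_filter] at hp1 hp2
          obtain ⟨-, -, -, m2, h2, hne, -⟩ := hp1
          obtain ⟨-, hq, -⟩ := hp2
          rw [h2] at hq
          exact hne (Option.some.inj hq)
        have e3 : (Finset.univ.filter fun p : V × V =>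
              g p.1 = some m ∧ H.Adj p.1 p.2 ∧ ∃ m2, g p.2 = some m2 ∧ m2 ≠ m ∧ h m2 = h m)
            = Finset.univ.filter fun p : V × V =>
              (p.1 = v ∧ (H.Adj v p.2 ∧ ∃ m2, g p.2 = some m2 ∧ m2 ≠ m ∧ h m2 = h m))
              ∨ (p.1 = u ∧ (H.Adj u p.2 ∧ ∃ m2, g p.2 = some m2 ∧ m2 ≠ m ∧ h m2 = h m)) := by
          refine Finset.filter_congr fun p _ => ?_
          constructor
          · rintro ⟨hq, hadj, hrest⟩
            rcases (hgm p.1).mp hq with h1 | h1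
            · rw [h1] at hadj; exact Or.inl ⟨h1, hadj, hrest⟩
            · rw [h1] at hadj; exact Or.inr ⟨h1, hadj, hrest⟩
          · rintro (⟨h1, hadj, hrest⟩ | ⟨h1, hadj, hrest⟩)
            · exact ⟨(hgm p.1).mpr (Or.inl h1), by rw [h1]; exact hadj, hrest⟩
            · exact ⟨(hgm p.1).mpr (Or.inr h1), by rw [h1]; exact hadj, hrest⟩
        have e4 : (Finset.univ.filter fun p : V × V =>
              g p.2 = some m ∧ H.Adj p.1 p.2 ∧ ∃ m1, g p.1 = some m1 ∧ m1 ≠ m ∧ h m1 = h m)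
            = Finset.univ.filter fun p : V × V =>
              (p.2 = v ∧ (H.Adj v p.1 ∧ ∃ m1, g p.1 = some m1 ∧ m1 ≠ m ∧ h m1 = h m))
              ∨ (p.2 = u ∧ (H.Adj u p.1 ∧ ∃ m1, g p.1 = some m1 ∧ m1 ≠ m ∧ h m1 = h m)) := by
          refine Finset.filter_congr fun p _ => ?_
          constructor
          · rintro ⟨hq, hadj, hrest⟩
            rcases (hgm p.2).mp hq with h1 | h1
            · rw [h1] at hadj; exact Or.inl ⟨h1, hadj.symm, hrest⟩
            · rw [h1] at hadj; exact Or.inr ⟨h1, hadj.symm, hrest⟩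
          · rintro (⟨h1, hadj, hrest⟩ | ⟨h1, hadj, hrest⟩)
            · exact ⟨(hgm p.2).mpr (Or.inl h1), by rw [h1]; exact hadj.symm, hrest⟩
            · exact ⟨(hgm p.2).mpr (Or.inr h1), by rw [h1]; exact hadj.symm, hrest⟩
        rw [e3, e4, Finset.filter_or, Finset.filter_or,
          Finset.card_union_of_disjoint ?d3, Finset.card_union_of_disjoint ?d4]
        case d3 =>
          rw [Finset.disjoint_left]
          intro p hp1 hp2
          rw [Finset.mem_filter] at hp1 hp2
          exact hvune (hp1.2.1.symm.trans hp2.2.1)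
        case d4 =>
          rw [Finset.disjoint_left]
          intro p hp1 hp2
          rw [Finset.mem_filter] at hp1 hp2
          exact hvune (hp1.2.1.symm.trans hp2.2.1)
        rw [card_filter_fst v (fun w => H.Adj v w ∧ ∃ m2, g w = some m2 ∧ m2 ≠ m ∧ h m2 = h m),
          card_filter_fst u (fun w => H.Adj u w ∧ ∃ m2, g w = some m2 ∧ m2 ≠ m ∧ h m2 = h m),
          card_filter_snd v (fun w => H.Adj v w ∧ ∃ m1, g w = some m1 ∧ m1 ≠ m ∧ h m1 = h m),
          card_filter_snd u (fun w => H.Adj u w ∧ ∃ m1, g w = some m1 ∧ m1 ≠ m ∧ h m1 = h m)]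
      -- splitting the conflict count
      have hsplit : ∀ h : Sym2 V → Fin 9,
          (Finset.univ.filter fun p : V × V => H.Adj p.1 p.2 ∧ ∃ m1 m2, g p.1 = some m1 ∧
            g p.2 = some m2 ∧ m1 ≠ m2 ∧ h m1 = h m2).card
          = (Finset.univ.filter fun p : V × V => (H.Adj p.1 p.2 ∧ ∃ m1 m2, g p.1 = some m1 ∧
              g p.2 = some m2 ∧ m1 ≠ m2 ∧ h m1 = h m2) ∧
              (g p.1 = some m ∨ g p.2 = some m)).card
            + (Finset.univ.filter fun p : V × V => (H.Adj p.1 p.2 ∧ ∃ m1 m2, g p.1 = some m1 ∧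
              g p.2 = some m2 ∧ m1 ≠ m2 ∧ h m1 = h m2) ∧
              ¬ (g p.1 = some m ∨ g p.2 = some m)).card := by
        intro h
        have base := Finset.card_filter_add_card_filter_not
          (s := Finset.univ.filter fun p : V × V => H.Adj p.1 p.2 ∧ ∃ m1 m2, g p.1 = some m1 ∧
            g p.2 = some m2 ∧ m1 ≠ m2 ∧ h m1 = h m2)
          (p := fun p : V × V => g p.1 = some m ∨ g p.2 = some m)
        rw [Finset.filter_filter, Finset.filter_filter] at base
        exact base.symm
      have hrest : (Finset.univ.filter fun p : V × V => (H.Adj p.1 p.2 ∧ ∃ m1 m2,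
            g p.1 = some m1 ∧ g p.2 = some m2 ∧ m1 ≠ m2 ∧ f m1 = f m2) ∧
            ¬ (g p.1 = some m ∨ g p.2 = some m))
          = Finset.univ.filter fun p : V × V => (H.Adj p.1 p.2 ∧ ∃ m1 m2,
            g p.1 = some m1 ∧ g p.2 = some m2 ∧ m1 ≠ m2 ∧ f' m1 = f' m2) ∧
            ¬ (g p.1 = some m ∨ g p.2 = some m) := by
        refine Finset.filter_congr fun p _ => ?_
        constructor
        · rintro ⟨⟨hadj, m1, m2, h1, h2, hne, hcol⟩, hq⟩
          have hm1 : m1 ≠ m := fun e => hq (Or.inl (e ▸ h1))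
          have hm2 : m2 ≠ m := fun e => hq (Or.inr (e ▸ h2))
          refine ⟨⟨hadj, m1, m2, h1, h2, hne, ?_⟩, hq⟩
          rw [hf'ne m1 hm1, hf'ne m2 hm2]; exact hcol
        · rintro ⟨⟨hadj, m1, m2, h1, h2, hne, hcol⟩, hq⟩
          have hm1 : m1 ≠ m := fun e => hq (Or.inl (e ▸ h1))
          have hm2 : m2 ≠ m := fun e => hq (Or.inr (e ▸ h2))
          refine ⟨⟨hadj, m1, m2, h1, h2, hne, ?_⟩, hq⟩
          rw [← hf'ne m1 hm1, ← hf'ne m2 hm2]; exact hcol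
      have hBf' : ∀ x : V, (Finset.univ.filter fun w => H.Adj x w ∧ ∃ m', g w = some m' ∧
            m' ≠ m ∧ f' m' = f' m)
          = Finset.univ.filter fun w => H.Adj x w ∧ ∃ m', g w = some m' ∧ m' ≠ m ∧
            f m' = c := by
        intro x
        refine Finset.filter_congr fun w _ => ?_
        constructor
        · rintro ⟨hadj, m', h1, h2, h3⟩
          refine ⟨hadj, m', h1, h2, ?_⟩
          rw [← hf'ne m' h2, h3]; exact hf'm
        · rintro ⟨hadj, m', h1, h2, h3⟩
          refine ⟨hadj, m', h1, h2, ?_⟩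
          rw [hf'ne m' h2, hf'm]; exact h3
      have hmono : (Finset.univ.filter fun p : V × V => H.Adj p.1 p.2 ∧ ∃ m1 m2,
            g p.1 = some m1 ∧ g p.2 = some m2 ∧ m1 ≠ m2 ∧ f m1 = f m2).card
          ≤ (Finset.univ.filter fun p : V × V => H.Adj p.1 p.2 ∧ ∃ m1 m2,
            g p.1 = some m1 ∧ g p.2 = some m2 ∧ m1 ≠ m2 ∧ f' m1 = f' m2).card := hfmin f'
      rw [hsplit f, hsplit f', hQcount f, hQcount f', hrest, hBf' v, hBf' u] at hmono
      omega
    -- summing the counts over colors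
    have hsumA : ∀ x : V, (∑ c : Fin 9, (Finset.univ.filter fun w => H.Adj x w ∧
        ∃ m', g w = some m' ∧ m' ≠ m ∧ f m' = c).card) ≤ H.degree x := by
      intro x
      have hdisj : ∀ c1 ∈ (Finset.univ : Finset (Fin 9)), ∀ c2 ∈ Finset.univ, c1 ≠ c2 →
          Disjoint (Finset.univ.filter fun w => H.Adj x w ∧ ∃ m', g w = some m' ∧ m' ≠ m ∧
              f m' = c1)
            (Finset.univ.filter fun w => H.Adj x w ∧ ∃ m', g w = some m' ∧ m' ≠ m ∧
              f m' = c2) := by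
        intro c1 _ c2 _ hne
        rw [Finset.disjoint_left]
        intro w h1 h2
        rw [Finset.mem_filter] at h1 h2
        obtain ⟨-, -, m1, hm1, -, hc1⟩ := h1
        obtain ⟨-, -, m2, hm2, -, hc2⟩ := h2
        rw [hm1] at hm2
        exact hne (by rw [← hc1, ← hc2, Option.some.inj hm2])
      calc (∑ c : Fin 9, (Finset.univ.filter fun w => H.Adj x w ∧ ∃ m', g w = some m' ∧
            m' ≠ m ∧ f m' = c).card)
          = ((Finset.univ : Finset (Fin 9)).biUnion fun c => Finset.univ.filter fun w =>
              H.Adj x w ∧ ∃ m', g w = some m' ∧ m' ≠ m ∧ f m' = c).card :=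
            (Finset.card_biUnion hdisj).symm
        _ ≤ (H.neighborFinset x).card := by
            refine Finset.card_le_card ?_
            intro w hw
            rw [Finset.mem_biUnion] at hw
            obtain ⟨c, -, hw⟩ := hw
            rw [Finset.mem_filter] at hw
            exact (H.mem_neighborFinset x w).mpr hw.2.1
        _ = H.degree x := rfl
    -- the numeric bound
    have h9 : 9 * (Finset.univ.filter fun w => H.Adj v w ∧ ∃ m', g w = some m' ∧ m' ≠ m ∧
        f m' = f m).card ≤ 2 * H.maxDegree := by
      have h1 : 9 * ((Finset.univ.filter fun w => H.Adj v w ∧ ∃ m', g w = some m' ∧ m' ≠ m ∧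
            f m' = f m).card
          + (Finset.univ.filter fun w => H.Adj u w ∧ ∃ m', g w = some m' ∧ m' ≠ m ∧
            f m' = f m).card)
          ≤ ∑ c : Fin 9, ((Finset.univ.filter fun w => H.Adj v w ∧ ∃ m', g w = some m' ∧
            m' ≠ m ∧ f m' = c).card
          + (Finset.univ.filter fun w => H.Adj u w ∧ ∃ m', g w = some m' ∧ m' ≠ m ∧
            f m' = c).card) := by
        calc 9 * ((Finset.univ.filter fun w => H.Adj v w ∧ ∃ m', g w = some m' ∧ m' ≠ m ∧
              f m' = f m).card
            + (Finset.univ.filter fun w => H.Adj u w ∧ ∃ m', g w = some m' ∧ m' ≠ m ∧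
              f m' = f m).card)
            = ∑ _c : Fin 9, ((Finset.univ.filter fun w => H.Adj v w ∧ ∃ m', g w = some m' ∧
              m' ≠ m ∧ f m' = f m).card
            + (Finset.univ.filter fun w => H.Adj u w ∧ ∃ m', g w = some m' ∧ m' ≠ m ∧
              f m' = f m).card) := by
              simp [Finset.sum_const, Finset.card_univ, mul_comm]
          _ ≤ _ := Finset.sum_le_sum fun c _ => key c
      rw [Finset.sum_add_distrib] at h1
      have h3 := hsumA v
      have h4 := hsumA u
      have h5 := H.degree_le_maxDegree v
      have h6 := H.degree_le_maxDegree u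
      omega
    -- remaining neighbors lie in the conflict set
    have hsub : (H.deleteEdges {e ∈ H.edgeSet | EdgeSatisfied (↑M) f e}).neighborSet v ⊆
        ↑(Finset.univ.filter fun w => H.Adj v w ∧ ∃ m', g w = some m' ∧ m' ≠ m ∧
          f m' = f m) := by
      intro w hw
      rw [SimpleGraph.mem_neighborSet, SimpleGraph.deleteEdges_adj] at hw
      obtain ⟨hadj, hns⟩ := hw
      have hnsat : ¬ EdgeSatisfied (↑M) f s(v,w) := fun hs =>
        hns (Set.mem_sep (H.mem_edgeSet.mpr hadj) hs)
      rw [Finset.mem_coe, Finset.mem_filter]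
      refine ⟨Finset.mem_univ _, hadj, ?_⟩
      cases hw2 : g w with
      | none =>
        exfalso
        apply hnsat
        refine satW v w m hmM (Or.inl hvm) ?_
        rintro e' he' ⟨x, hx1, hx2⟩ -
        rcases Sym2.mem_iff.mp hx1 with h1 | h1 <;> subst h1
        · exact hmem_eq _ e' he' hx2 m hmM hvm
        · exact absurd hx2 (hg3 _ hw2 e' he')
      | some m2 =>
        obtain ⟨hm2M, hwm2⟩ := hg1 w m2 hw2
        by_cases hm2m : m2 = m
        · exfalso
          subst hm2m
          have hwu : w = u := by
            rw [hmu] at hwm2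
            rcases Sym2.mem_iff.mp hwm2 with h1 | h1
            · exact absurd h1.symm (H.ne_of_adj hadj)
            · exact h1
          apply hnsat
          have hEq : s(v,w) = m2 := by rw [hwu, hmu]
          rw [hEq]
          exact satM m2 hmM
        · by_cases hcol : f m2 = f m
          · exact ⟨m2, rfl, hm2m, hcol⟩
          · exfalso
            apply hnsat
            refine satW v w m hmM (Or.inl hvm) ?_
            rintro e' he' ⟨x, hx1, hx2⟩ hfe
            rcases Sym2.mem_iff.mp hx1 with h1 | h1 <;> subst h1
            · exact hmem_eq _ e' he' hx2 m hmM hvm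
            · exact absurd ((hmem_eq _ e' he' hx2 m2 hm2M hwm2) ▸ hfe) hcol
    -- conclude
    calc (((H.deleteEdges {e ∈ H.edgeSet | EdgeSatisfied (↑M) f e}).neighborSet v).ncard : ℝ)
        ≤ ((Finset.univ.filter fun w => H.Adj v w ∧ ∃ m', g w = some m' ∧ m' ≠ m ∧
            f m' = f m).card : ℝ) := by
          have hle := Set.ncard_le_ncard hsub (Set.toFinite _)
          rw [Set.ncard_coe_finset] at hle
          exact_mod_cast hle
      _ ≤ 2/9 * H.maxDegree := by
          have hcast : (9:ℝ) * (Finset.univ.filter fun w => H.Adj v w ∧ ∃ m', g w = some m' ∧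
              m' ≠ m ∧ f m' = f m).card ≤ 2 * H.maxDegree := by exact_mod_cast h9
          linarith
      _ ≤ (1 - Real.exp (-4)) * H.maxDegree :=
          mul_le_mul_of_nonneg_right hexp2 (Nat.cast_nonneg _)
end

section
/- There is an absolute constant C such that every line graph G of a graph H with maximum degree Δ ≥ 2 satisfies χ_CF(G) ≤ C·ln Δ. Equivalently, every graph H with maximum degree Δ ≥ 2 admits a conflict-free edge coloring with at most C·ln Δ colors. -/
/-!
A vertex bipartition minimising the number of adjacent pairs on the same side cannot be improved
by moving one vertex across, so every vertex has at most half of its neighbours on its own side.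
Hence every graph is the edge-disjoint union of a bipartite graph (the crossing edges) and a graph
of half the maximum degree. Conflict-free edge colourings of edge-disjoint graphs combine by using
disjoint palettes, so `log₂ Δ + 1` halving steps give `5 (log₂ Δ + 1)` colours once bipartite
graphs are coloured with 5 colours.

A bipartite graph is coloured along BFS layers grown from a root in each component: the parent
edge of a vertex on level `ℓ ≥ 1` gets colour `ℓ % 3`, one edge at each root gets colour `3`, all
other edges colour `4`. Adjacent vertices lie on consecutive levels, so for an edge `uv` with `u`
one level below `v`, the parent edge of `u` (the root edge if `u` is a root) is the only edge
touching `uv` with its colour.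
-/

namespace SimpleGraph

variable {V : Type*}

def IsConflictFreeAt {α : Type*} (G : SimpleGraph V) (f : Sym2 V → α) (e : Sym2 V) : Prop :=
  ∃ e' ∈ G.edgeSet, (∃ v, v ∈ e ∧ v ∈ e') ∧
    ∀ e'' ∈ G.edgeSet, (∃ v, v ∈ e ∧ v ∈ e'') → f e'' = f e' → e'' = e'

def ConflictFreeEdgeColorable (G : SimpleGraph V) (n : ℕ) : Prop :=
  ∃ f : Sym2 V → ℕ, (∀ e ∈ G.edgeSet, G.IsConflictFreeAt f e) ∧ ∀ e ∈ G.edgeSet, f e < n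

theorem IsConflictFreeAt.of_le {α β : Type*} {G₀ G : SimpleGraph V} {f₀ : Sym2 V → α}
    {f : Sym2 V → β} {e : Sym2 V} (h : G₀.IsConflictFreeAt f₀ e) (hle : G₀ ≤ G)
    (hf : ∀ e' ∈ G₀.edgeSet, ∀ e'' ∈ G.edgeSet, f e'' = f e' → e'' ∈ G₀.edgeSet ∧ f₀ e'' = f₀ e') :
    G.IsConflictFreeAt f e := by
  obtain ⟨e', he', htouch, huniq⟩ := h
  refine ⟨e', edgeSet_mono hle he', htouch, fun e'' he'' htouch'' hcol => ?_⟩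
  obtain ⟨he''₀, hcol₀⟩ := hf e' he' e'' he'' hcol
  exact huniq e'' he''₀ htouch'' hcol₀

theorem ConflictFreeEdgeColorable.sup {G₁ G₂ : SimpleGraph V} {n₁ n₂ : ℕ}
    (h₁ : G₁.ConflictFreeEdgeColorable n₁) (h₂ : G₂.ConflictFreeEdgeColorable n₂)
    (hd : Disjoint G₁ G₂) : (G₁ ⊔ G₂).ConflictFreeEdgeColorable (n₁ + n₂) := by
  classical
  obtain ⟨f₁, hf₁, hlt₁⟩ := h₁
  obtain ⟨f₂, hf₂, hlt₂⟩ := h₂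
  set g : Sym2 V → ℕ := fun e => if e ∈ G₁.edgeSet then f₁ e else n₁ + f₂ e
  have hg₁ {e : Sym2 V} (he : e ∈ G₁.edgeSet) : g e = f₁ e := if_pos he
  have hg₂ {e : Sym2 V} (he : e ∉ G₁.edgeSet) : g e = n₁ + f₂ e := if_neg he
  have hd' {e : Sym2 V} (he₂ : e ∈ G₂.edgeSet) : e ∉ G₁.edgeSet := fun he₁ =>
    Set.disjoint_left.mp (disjoint_edgeSet.mpr hd) he₁ he₂
  refine ⟨g, fun e he => ?_, fun e he => ?_⟩ <;> rw [edgeSet_sup] at he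
  · by_cases he₁ : e ∈ G₁.edgeSet
    · refine (hf₁ e he₁).of_le le_sup_left fun e' he' e'' he'' hcol => ?_
      by_cases he''₁ : e'' ∈ G₁.edgeSet
      · exact ⟨he''₁, by rwa [hg₁ he', hg₁ he''₁] at hcol⟩
      · rw [hg₁ he', hg₂ he''₁] at hcol
        have := hlt₁ e' he'
        omega
    · refine (hf₂ e (he.resolve_left he₁)).of_le le_sup_right fun e' he' e'' he'' hcol => ?_
      rw [edgeSet_sup] at he''
      by_cases he''₁ : e'' ∈ G₁.edgeSet
      · rw [hg₁ he''₁, hg₂ (hd' he')] at hcol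
        have := hlt₁ e'' he''₁
        omega
      · rw [hg₂ he''₁, hg₂ (hd' he')] at hcol
        exact ⟨he''.resolve_left he''₁, by omega⟩
  · by_cases he₁ : e ∈ G₁.edgeSet
    · rw [hg₁ he₁]
      exact (hlt₁ e he₁).trans_le (Nat.le_add_right _ _)
    · rw [hg₂ he₁]
      have := hlt₂ e (he.resolve_left he₁)
      omega

section MaxCut

open Finset

variable [Fintype V] [DecidableEq V] (G : SimpleGraph V) [DecidableRel G.Adj]

def sameSideDegree (S : Finset V) (v : V) : ℕ := #{w ∈ G.neighborFinset v | w ∈ S ↔ v ∈ S}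

theorem sum_sameSideDegree_eq (S : Finset V) (v : V) :
    ∑ u, G.sameSideDegree S u = 2 * G.sameSideDegree S v +
      ∑ u ∈ univ.erase v, #{w ∈ (G.neighborFinset u).erase v | w ∈ S ↔ u ∈ S} := by
  have hsplit (u : V) : G.sameSideDegree S u =
      #{w ∈ (G.neighborFinset u).erase v | w ∈ S ↔ u ∈ S} +
        if v ∈ G.neighborFinset u ∧ (v ∈ S ↔ u ∈ S) then 1 else 0 := by
    rw [sameSideDegree, filter_erase]
    split_ifs with h
    · exact (card_erase_add_one (mem_filter.mpr h)).symm
    · rw [erase_eq_of_notMem fun h' => h (mem_filter.mp h'), add_zero]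
  have hback : ∑ u ∈ univ.erase v,
      (if v ∈ G.neighborFinset u ∧ (v ∈ S ↔ u ∈ S) then 1 else 0) = G.sameSideDegree S v := by
    rw [sum_boole, Nat.cast_id, sameSideDegree]
    congr 1
    ext u
    simp only [mem_filter, mem_erase, mem_univ, mem_neighborFinset, and_true]
    exact ⟨fun ⟨_, hadj, hs⟩ => ⟨hadj.symm, hs.symm⟩,
      fun ⟨hadj, hs⟩ => ⟨hadj.ne', hadj.symm, hs.symm⟩⟩
  rw [← add_sum_erase _ _ (mem_univ v), sum_congr rfl fun u _ => hsplit u, sum_add_distrib, hback]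
  ring

theorem sameSideDegree_symmDiff_add (S : Finset V) (v : V) :
    G.sameSideDegree (symmDiff S {v}) v + G.sameSideDegree S v = G.degree v := by
  rw [← card_neighborFinset_eq_degree, sameSideDegree, sameSideDegree, add_comm,
    ← card_filter_add_card_filter_not (s := G.neighborFinset v) (fun w => w ∈ S ↔ v ∈ S)]
  congr 2
  ext w
  simp only [mem_filter, mem_neighborFinset, mem_symmDiff, mem_singleton, and_congr_right_iff]
  intro hadj
  have := hadj.ne'
  tauto

theorem exists_forall_two_mul_sameSideDegree_le :
    ∃ S : Finset V, ∀ v, 2 * G.sameSideDegree S v ≤ G.degree v := by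
  obtain ⟨S, -, hmin⟩ := exists_min_image univ (fun S => ∑ u, G.sameSideDegree S u) univ_nonempty
  refine ⟨S, fun v => ?_⟩
  have hflip := hmin (symmDiff S {v}) (mem_univ _)
  have hmem (x : V) (hx : x ≠ v) : x ∈ symmDiff S {v} ↔ x ∈ S := by
    simp [mem_symmDiff, hx]
  have hrest : ∑ u ∈ univ.erase v, #{w ∈ (G.neighborFinset u).erase v | w ∈ S ↔ u ∈ S} =
      ∑ u ∈ univ.erase v,
        #{w ∈ (G.neighborFinset u).erase v | w ∈ symmDiff S {v} ↔ u ∈ symmDiff S {v}} := by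
    refine sum_congr rfl fun u hu => congrArg card (filter_congr fun w hw => ?_)
    rw [hmem u (mem_erase.mp hu).1, hmem w (mem_erase.mp hw).1]
  rw [G.sum_sameSideDegree_eq S v, G.sum_sameSideDegree_eq _ v, ← hrest] at hflip
  have := G.sameSideDegree_symmDiff_add S v
  omega

end MaxCut

section Bfs

variable (F : SimpleGraph V)

noncomputable def bfsRoot (v : V) : V := (F.connectedComponentMk v).out

noncomputable def bfsLevel (v : V) : ℕ := F.dist (F.bfsRoot v) v

noncomputable def bfsParent (v : V) : V :=
  @Classical.epsilon V ⟨v⟩ fun u => F.Adj u v ∧ F.bfsLevel u + 1 = F.bfsLevel v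

-- Junk (not an edge) when the root is isolated.
noncomputable def bfsRootEdge (v : V) : Sym2 V :=
  s(F.bfsRoot v, @Classical.epsilon V ⟨v⟩ (F.Adj (F.bfsRoot v)))

open Classical in
noncomputable def bfsColor (e : Sym2 V) : ℕ :=
  if ∃ v, e = F.bfsRootEdge v then 3
  else if h : ∃ x, F.bfsLevel x ≠ 0 ∧ e = s(x, F.bfsParent x) then F.bfsLevel h.choose % 3
  else 4

theorem reachable_bfsRoot (v : V) : F.Reachable (F.bfsRoot v) v :=
  ConnectedComponent.exact (Quot.out_eq _)

variable {F}

theorem bfsRoot_eq_of_reachable {u v : V} (h : F.Reachable u v) : F.bfsRoot u = F.bfsRoot v := by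
  rw [bfsRoot, bfsRoot, ConnectedComponent.sound h]

theorem bfsLevel_eq_zero_iff {v : V} : F.bfsLevel v = 0 ↔ F.bfsRoot v = v :=
  (F.reachable_bfsRoot v).dist_eq_zero_iff

theorem exists_adj_bfsLevel_add_one {v : V} (hv : F.bfsLevel v ≠ 0) :
    ∃ u, F.Adj u v ∧ F.bfsLevel u + 1 = F.bfsLevel v := by
  obtain ⟨p, hp⟩ := (F.reachable_bfsRoot v).symm.exists_walk_length_eq_dist
  rw [dist_comm, ← bfsLevel] at hp
  have hne : v ≠ F.bfsRoot v := fun h => hv (bfsLevel_eq_zero_iff.mpr h.symm)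
  obtain ⟨u, hvu, q, rfl⟩ := Walk.exists_eq_cons_of_ne hne p
  have hroot := bfsRoot_eq_of_reachable hvu.reachable
  have hle : F.bfsLevel u ≤ q.length := by
    rw [bfsLevel, ← hroot]
    simpa using dist_le q.reverse
  rw [Walk.length_cons] at hp
  refine ⟨u, hvu.symm, ?_⟩
  rcases hvu.symm.diff_dist_adj (u := F.bfsRoot v) with h | h | h <;>
    rw [← bfsLevel, hroot, ← bfsLevel] at h <;> omega

theorem bfsParent_spec {v : V} (hv : F.bfsLevel v ≠ 0) :
    F.Adj (F.bfsParent v) v ∧ F.bfsLevel (F.bfsParent v) + 1 = F.bfsLevel v :=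
  Classical.epsilon_spec (exists_adj_bfsLevel_add_one hv)

theorem bfsLevel_adj (c : F.Coloring Bool) {u v : V} (h : F.Adj u v) :
    F.bfsLevel v = F.bfsLevel u + 1 ∨ F.bfsLevel u = F.bfsLevel v + 1 := by
  have hroot := bfsRoot_eq_of_reachable h.reachable
  obtain ⟨p, hp⟩ := (F.reachable_bfsRoot u).exists_walk_length_eq_dist
  have hrv : F.Reachable (F.bfsRoot u) v := hroot ▸ F.reachable_bfsRoot v
  obtain ⟨q, hq⟩ := hrv.exists_walk_length_eq_dist
  have hparity : ¬(Even p.length ↔ Even q.length) := by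
    rw [c.even_length_iff_congr, c.even_length_iff_congr]
    have := c.valid h
    revert this
    cases c u <;> cases c v <;> cases c (F.bfsRoot u) <;> decide
  rw [hp, hq] at hparity
  have hne : F.dist (F.bfsRoot u) v ≠ F.dist (F.bfsRoot u) u := fun he => hparity (he ▸ Iff.rfl)
  rw [bfsLevel, bfsLevel, ← hroot]
  rcases h.diff_dist_adj (u := F.bfsRoot u) with h | h | h <;> omega

theorem bfsRootEdge_eq_of_reachable {u v : V} (h : F.Reachable u v) :
    F.bfsRootEdge u = F.bfsRootEdge v := by
  rw [bfsRootEdge, bfsRootEdge, bfsRoot_eq_of_reachable h]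

theorem bfsRootEdge_mem_edgeSet {v w : V} (h : F.Adj (F.bfsRoot v) w) :
    F.bfsRootEdge v ∈ F.edgeSet :=
  Classical.epsilon_spec ⟨w, h⟩

theorem bfsRootEdge_eq_of_mem {v w : V} (he : F.bfsRootEdge v ∈ F.edgeSet)
    (hw : w ∈ F.bfsRootEdge v) : F.bfsRootEdge v = F.bfsRootEdge w := by
  have hadj : F.Adj (F.bfsRoot v) _ := he
  apply bfsRootEdge_eq_of_reachable
  rcases Sym2.mem_iff.mp hw with rfl | rfl
  · exact (F.reachable_bfsRoot v).symm
  · exact (F.reachable_bfsRoot v).symm.trans hadj.reachable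

theorem bfsColor_lt_five (e : Sym2 V) : F.bfsColor e < 5 := by
  unfold bfsColor
  split_ifs <;> omega

theorem bfsColor_bfsRootEdge (v : V) : F.bfsColor (F.bfsRootEdge v) = 3 := by
  rw [bfsColor, if_pos ⟨v, rfl⟩]

theorem exists_eq_bfsRootEdge_of_bfsColor_eq_three {e : Sym2 V} (h : F.bfsColor e = 3) :
    ∃ v, e = F.bfsRootEdge v := by
  unfold bfsColor at h
  split_ifs at h with hroot
  · exact hroot
  all_goals omega

theorem eq_of_bfsParent_edge_eq {x y : V} (hx : F.bfsLevel x ≠ 0) (hy : F.bfsLevel y ≠ 0)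
    (h : s(x, F.bfsParent x) = s(y, F.bfsParent y)) : x = y := by
  rcases Sym2.eq_iff.mp h with ⟨hxy, -⟩ | ⟨hxy, hyx⟩
  · exact hxy
  · have hx' := (bfsParent_spec hx).2
    have hy' := (bfsParent_spec hy).2
    rw [hyx, hxy] at hx'
    omega

theorem bfsColor_bfsParent_edge {x : V} (hx : F.bfsLevel x ≠ 0)
    (hroot : ¬∃ v, s(x, F.bfsParent x) = F.bfsRootEdge v) :
    F.bfsColor s(x, F.bfsParent x) = F.bfsLevel x % 3 := by
  have hpar : ∃ y, F.bfsLevel y ≠ 0 ∧ s(x, F.bfsParent x) = s(y, F.bfsParent y) := ⟨x, hx, rfl⟩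
  rw [bfsColor, if_neg hroot, dif_pos hpar,
    eq_of_bfsParent_edge_eq hpar.choose_spec.1 hx hpar.choose_spec.2.symm]

theorem exists_bfsParent_edge_of_bfsColor_lt_three {e : Sym2 V} (h : F.bfsColor e < 3) :
    ∃ x, F.bfsLevel x ≠ 0 ∧ e = s(x, F.bfsParent x) ∧ F.bfsColor e = F.bfsLevel x % 3 := by
  unfold bfsColor at h ⊢
  split_ifs at h ⊢ with hroot hpar
  · omega
  · exact ⟨hpar.choose, hpar.choose_spec.1, hpar.choose_spec.2, rfl⟩
  · omega

theorem isConflictFreeAt_of_bfsRootEdge {u v : V} (huv : F.Adj u v)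
    (hmem : F.bfsRootEdge u ∈ F.edgeSet) (hu : u ∈ F.bfsRootEdge u) :
    F.IsConflictFreeAt F.bfsColor s(u, v) := by
  refine ⟨_, hmem, ⟨u, Sym2.mem_mk_left u v, hu⟩, fun e he ⟨w, hw, hwe⟩ hcol => ?_⟩
  rw [bfsColor_bfsRootEdge] at hcol
  obtain ⟨y, rfl⟩ := exists_eq_bfsRootEdge_of_bfsColor_eq_three hcol
  rw [bfsRootEdge_eq_of_mem he hwe]
  apply bfsRootEdge_eq_of_reachable
  rcases Sym2.mem_iff.mp hw with rfl | rfl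
  · rfl
  · exact huv.reachable.symm

theorem isConflictFreeAt_bfsColor {u v : V} (huv : F.Adj u v)
    (hlev : F.bfsLevel v = F.bfsLevel u + 1) : F.IsConflictFreeAt F.bfsColor s(u, v) := by
  by_cases hu : F.bfsLevel u = 0
  · have hroot := bfsLevel_eq_zero_iff.mp hu
    refine isConflictFreeAt_of_bfsRootEdge huv (bfsRootEdge_mem_edgeSet (hroot ▸ huv)) ?_
    rw [bfsRootEdge, hroot]
    exact Sym2.mem_mk_left _ _
  have hpar := (bfsParent_spec hu).1
  by_cases hre : ∃ y, s(u, F.bfsParent u) = F.bfsRootEdge y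
  · obtain ⟨y, hy⟩ := hre
    have hmem : F.bfsRootEdge y ∈ F.edgeSet := hy ▸ hpar.symm
    have hy' := hy.trans (bfsRootEdge_eq_of_mem hmem (hy ▸ Sym2.mem_mk_left _ _))
    exact isConflictFreeAt_of_bfsRootEdge huv (hy' ▸ hpar.symm) (hy' ▸ Sym2.mem_mk_left _ _)
  refine ⟨s(u, F.bfsParent u), hpar.symm, ⟨u, Sym2.mem_mk_left _ _, Sym2.mem_mk_left _ _⟩,
    fun e he ⟨w, hw, hwe⟩ hcol => ?_⟩
  rw [bfsColor_bfsParent_edge hu hre] at hcol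
  obtain ⟨x, hx, rfl, hxcol⟩ :=
    exists_bfsParent_edge_of_bfsColor_lt_three (hcol ▸ Nat.mod_lt _ three_pos)
  have hxlev := (bfsParent_spec hx).2
  rw [hcol] at hxcol
  suffices x = u by rw [this]
  rcases Sym2.mem_iff.mp hw with rfl | rfl <;> rcases Sym2.mem_iff.mp hwe with h | h
  · exact h.symm
  · rw [← h] at hxlev
    omega
  · rw [← h] at hxcol
    omega
  · rw [← h] at hxlev
    omega

theorem IsBipartite.conflictFreeEdgeColorable_five (hF : F.IsBipartite) :
    F.ConflictFreeEdgeColorable 5 := by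
  let c : F.Coloring Bool := hF.toColoring (by simp)
  refine ⟨F.bfsColor, fun e he => ?_, fun e _ => bfsColor_lt_five e⟩
  induction e using Sym2.ind with
  | h u v =>
    rcases bfsLevel_adj c he with h | h
    · exact isConflictFreeAt_bfsColor he h
    · rw [Sym2.eq_swap]
      exact isConflictFreeAt_bfsColor he.symm h

end Bfs

theorem ConflictFreeEdgeColorable.exists_fin {G : SimpleGraph V} {n : ℕ}
    (h : G.ConflictFreeEdgeColorable n) :
    ∃ f : G.edgeSet → Fin n, ∀ e : G.edgeSet, ∃ a : Fin n, ∃! e' : G.edgeSet,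
      (∃ v : V, v ∈ (e : Sym2 V) ∧ v ∈ (e' : Sym2 V)) ∧ f e' = a := by
  obtain ⟨f, hf, hlt⟩ := h
  refine ⟨fun e => ⟨f e, hlt e e.2⟩, fun e => ?_⟩
  obtain ⟨e', he', htouch, huniq⟩ := hf e e.2
  exact ⟨_, ⟨e', he'⟩, ⟨htouch, rfl⟩, fun e'' ⟨htouch'', hcol⟩ =>
    Subtype.ext (huniq e'' e''.2 htouch'' (Fin.val_eq_of_eq hcol))⟩

theorem conflictFreeEdgeColorable_of_forall_degree_lt [Fintype V] (k : ℕ) (G : SimpleGraph V)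
    [DecidableRel G.Adj] (hdeg : ∀ v, G.degree v < 2 ^ k) :
    G.ConflictFreeEdgeColorable (5 * k) := by
  induction k generalizing G with
  | zero =>
    have hnone : ∀ e ∈ G.edgeSet, False := by
      intro e he
      induction e using Sym2.ind with
      | h u v =>
        have := (G.degree_pos_iff_exists_adj u).mpr ⟨v, he⟩
        have := hdeg u
        omega
    exact ⟨fun _ => 0, fun e he => (hnone e he).elim, fun e he => (hnone e he).elim⟩
  | succ k ih =>
    classical
    obtain ⟨S, hS⟩ := G.exists_forall_two_mul_sameSideDegree_le
    set B := G.between ↑S (↑S)ᶜ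
    have hdeg' (v : V) : (G \ B).degree v < 2 ^ k := by
      have hnbr : (G \ B).neighborFinset v = {w ∈ G.neighborFinset v | w ∈ S ↔ v ∈ S} := by
        ext w
        simp only [B, mem_neighborFinset, sdiff_adj, between_adj, Finset.mem_filter,
          Set.mem_compl_iff, Finset.mem_coe]
        tauto
      have hsame := hS v
      rw [sameSideDegree, ← hnbr, card_neighborFinset_eq_degree] at hsame
      have := hdeg v
      rw [pow_succ] at this
      omega
    have hB : B.ConflictFreeEdgeColorable 5 :=
      (between_isBipartite disjoint_compl_right).conflictFreeEdgeColorable_five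
    have := hB.sup (ih (G \ B) hdeg') disjoint_sdiff_self_right
    rwa [sup_sdiff_cancel_right between_le, add_comm, ← Nat.mul_add_one] at this

end SimpleGraph

/-- There is an absolute constant `C` such that every graph `H` with maximum degree
`Δ ≥ 2` admits a conflict-free edge coloring with at most `C·ln Δ` colors; equivalently,
the conflict-free chromatic number of any line graph of maximum degree `Δ` is `O(ln Δ)`. -/
theorem conflict_free_index_log_bound :
    ∃ C : ℝ, 0 < C ∧ ∀ (V : Type) [Fintype V] (H : SimpleGraph V) [DecidableRel H.Adj],
      2 ≤ H.maxDegree →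
      ∃ (n : ℕ) (f : H.edgeSet → Fin n),
        (n : ℝ) ≤ C * Real.log H.maxDegree ∧
        ∀ e : H.edgeSet, ∃ a : Fin n, ∃! e' : H.edgeSet,
          (∃ v : V, v ∈ (e : Sym2 V) ∧ v ∈ (e' : Sym2 V)) ∧ f e' = a := by
  refine ⟨10 / Real.log 2, by positivity, fun V _ H _ hΔ => ?_⟩
  set L := Nat.log 2 H.maxDegree
  have hL : 1 ≤ L := Nat.le_log_of_pow_le one_lt_two (by simpa using hΔ)
  obtain ⟨f, hf⟩ := (SimpleGraph.conflictFreeEdgeColorable_of_forall_degree_lt (L + 1) H fun v =>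
    (H.degree_le_maxDegree v).trans_lt (Nat.lt_pow_succ_log_self one_lt_two _)).exists_fin
  refine ⟨5 * (L + 1), f, ?_, hf⟩
  calc ((5 * (L + 1) : ℕ) : ℝ) ≤ 10 * L := by
        push_cast
        linarith [(Nat.one_le_cast (α := ℝ)).mpr hL]
    _ ≤ 10 * Real.logb 2 H.maxDegree := by gcongr; exact_mod_cast Real.natLog_le_logb _ _
    _ = 10 / Real.log 2 * Real.log H.maxDegree := by rw [Real.logb]; ring
end
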